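/- arXiv:2202.06826 — 6 statements merged into one kernel-verified Lean document; each statement's English description precedes it below -/
import Mathlib

section
/- Let P_X and Q_X be probability distributions over a finite set X, and let W ⊆ X be an event such that P_X(W) > 0 and Q_X(W) > 0. Then the L1 distance between the conditional distributions satisfies ‖P_{X|W} − Q_{X|W}‖₁ ≤ (2 / Q_X(W)) · ‖P_X − Q_X‖₁. -/
/-- For probability distributions `P`, `Q` on a finite set `X` and an event
`W` with positive probability under both, the L1 distance of conditional distributions
satisfies `‖P_{X|W} − Q_{X|W}‖₁ ≤ (2 / Q_X(W)) · ‖P_X − Q_X‖₁`. -/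
theorem stmt_0 {X : Type*} [Fintype X] [DecidableEq X]
    (P Q : X → ℝ) (hP0 : ∀ x, 0 ≤ P x) (hQ0 : ∀ x, 0 ≤ Q x)
    (hP1 : ∑ x, P x = 1) (hQ1 : ∑ x, Q x = 1)
    (W : Finset X)
    (hPW : 0 < ∑ x ∈ W, P x) (hQW : 0 < ∑ x ∈ W, Q x) :
    ∑ x, |(if x ∈ W then P x / (∑ y ∈ W, P y) else 0) -
          (if x ∈ W then Q x / (∑ y ∈ W, Q y) else 0)| ≤
      (2 / ∑ x ∈ W, Q x) * ∑ x, |P x - Q x| := by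
  set p := ∑ x ∈ W, P x with hp
  set q := ∑ x ∈ W, Q x with hq
  set S := ∑ y, |P y - Q y| with hSdef
  have hS0 : 0 ≤ S := Finset.sum_nonneg fun y _ => abs_nonneg _
  have hWS : ∑ x ∈ W, |P x - Q x| ≤ S := by
    apply Finset.sum_le_sum_of_subset_of_nonneg (Finset.subset_univ W)
    intros; exact abs_nonneg _
  have hpq : |q - p| ≤ S := by
    have : q - p = ∑ x ∈ W, (Q x - P x) := by rw [Finset.sum_sub_distrib]
    rw [this]
    calc |∑ x ∈ W, (Q x - P x)| ≤ ∑ x ∈ W, |Q x - P x| :=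
          Finset.abs_sum_le_sum_abs _ _
      _ = ∑ x ∈ W, |P x - Q x| := by simp [abs_sub_comm]
      _ ≤ S := hWS
  have hsum : (∑ x, |(if x ∈ W then P x / p else 0) -
          (if x ∈ W then Q x / q else 0)|) = ∑ x ∈ W, |P x / p - Q x / q| := by
    rw [← Finset.sum_subset (Finset.subset_univ W)
      (fun x _ hx => by simp [hx])]
    exact Finset.sum_congr rfl fun x hx => by simp [hx]
  rw [hsum]
  have hpt : ∀ x ∈ W, |P x / p - Q x / q| ≤ |P x - Q x| / q + P x * |q - p| / (p * q) := by
    intro x _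
    have : P x / p - Q x / q = (P x - Q x) / q + P x * (q - p) / (p * q) := by
      field_simp
      ring
    rw [this]
    calc |(P x - Q x) / q + P x * (q - p) / (p * q)|
        ≤ |(P x - Q x) / q| + |P x * (q - p) / (p * q)| := abs_add_le _ _
      _ = |P x - Q x| / q + P x * |q - p| / (p * q) := by
          rw [abs_div, abs_div, abs_mul, abs_mul,
            abs_of_pos hQW, abs_of_pos hPW, abs_of_nonneg (hP0 x)]
  calc ∑ x ∈ W, |P x / p - Q x / q|
      ≤ ∑ x ∈ W, (|P x - Q x| / q + P x * |q - p| / (p * q)) :=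
        Finset.sum_le_sum hpt
    _ = (∑ x ∈ W, |P x - Q x|) / q + p * |q - p| / (p * q) := by
        rw [Finset.sum_add_distrib, ← Finset.sum_div, ← Finset.sum_div,
          ← Finset.sum_mul]
    _ = (∑ x ∈ W, |P x - Q x|) / q + |q - p| / q := by
        congr 1
        field_simp
    _ ≤ S / q + S / q := by
        gcongr
    _ = (2 / q) * S := by ring
end

section
/- For every n ∈ ℕ, every fixed string a ∈ {0,1}^n, and all functions g, h : {0,1}^n → {0,1}^n, the probability, over (x,y,z) drawn from the n-fold product of the uniform distribution on {(0,1,1),(1,0,1),(1,1,0)}, that the triple (a_i, g(y)_i, h(z)_i) wins the anti-correlation game on (x_i, y_i, z_i) for more than 0.99n values of i ∈ [n], is at most 3·e^{−10^{−7} n}. -/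
/-!
Write `q₁ = (0,1,1)`. Coordinatewise, on every question,
`1 ≤ [x ≠ q₁] + [b = a]·drift_{q₁,(1,1,0)} + [c = a]·drift_{q₁,(1,0,1)} + [loss]`.
Summing, more than `0.99 n` wins force one of: more than `23n/30` questions differ from `q₁`
(a Chernoff bound, the mean being `2n/3`), or one of the two adaptive players accumulates drift at
least `n/10` on the coordinates where his answer agrees with `a`. The second player sees only `y`,
and given `y_i = 1` the question is `q₁` or `(1,1,0)` with equal probability, independently of
`g y`; so his drift is a martingale with `±1` steps and exponential Markov bounds it, fiberwise
over `y`. The third player is symmetric.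
-/

open Finset

section General

variable {ι α β γ : Type*}

theorem prod_zpow_eq_zpow_sum₀ {G₀ : Type*} [CommGroupWithZero G₀] {r : G₀} (hr : r ≠ 0)
    (s : Finset ι) (f : ι → ℤ) : ∏ i ∈ s, r ^ f i = r ^ ∑ i ∈ s, f i := by
  induction s using Finset.cons_induction with
  | empty => simp
  | cons a s _ ih => rw [prod_cons, sum_cons, ih, zpow_add₀ hr]

theorem card_filter_mul_zpow_le_sum (s : Finset γ) (X : γ → ℤ) (k : ℤ) {r : ℝ} (hr : 1 ≤ r) :
    (#{q ∈ s | k ≤ X q} : ℝ) * r ^ k ≤ ∑ q ∈ s, r ^ X q := by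
  have hr₀ : 0 < r := zero_lt_one.trans_le hr
  calc (#{q ∈ s | k ≤ X q} : ℝ) * r ^ k = ∑ q ∈ s with k ≤ X q, r ^ k := by
        rw [sum_const, nsmul_eq_mul]
    _ ≤ ∑ q ∈ s with k ≤ X q, r ^ X q :=
        sum_le_sum fun q hq => zpow_le_zpow_right₀ hr (mem_filter.1 hq).2
    _ ≤ ∑ q ∈ s, r ^ X q :=
        sum_le_sum_of_subset_of_nonneg (filter_subset _ _) fun _ _ _ => (zpow_pos hr₀ _).le

theorem card_filter_mul_le_of_imp_or {s : Finset γ} {P E₁ E₂ E₃ : γ → Prop} [DecidablePred P]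
    [DecidablePred E₁] [DecidablePred E₂] [DecidablePred E₃] {w x : ℝ} (hw : 0 ≤ w)
    (hP : ∀ q ∈ s, P q → E₁ q ∨ E₂ q ∨ E₃ q) (h₁ : (#{q ∈ s | E₁ q} : ℝ) * w ≤ x)
    (h₂ : (#{q ∈ s | E₂ q} : ℝ) * w ≤ x) (h₃ : (#{q ∈ s | E₃ q} : ℝ) * w ≤ x) :
    (#{q ∈ s | P q} : ℝ) * w ≤ 3 * x := by
  classical
  have hsub : {q ∈ s | P q} ⊆ {q ∈ s | E₁ q} ∪ ({q ∈ s | E₂ q} ∪ {q ∈ s | E₃ q}) := by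
    intro q hq
    rw [mem_filter] at hq
    simpa [hq.1] using hP q hq.1 hq.2
  have hcard : #{q ∈ s | P q} ≤ #{q ∈ s | E₁ q} + #{q ∈ s | E₂ q} + #{q ∈ s | E₃ q} := by
    grw [card_le_card hsub, card_union_le, card_union_le, add_assoc]
  have hcard' : (#{q ∈ s | P q} : ℝ) ≤ #{q ∈ s | E₁ q} + #{q ∈ s | E₂ q} + #{q ∈ s | E₃ q} := by
    exact_mod_cast hcard
  nlinarith

theorem add_inv_sub_two_nonneg {r : ℝ} (hr : 0 < r) : 0 ≤ r + r⁻¹ - 2 := by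
  rw [show r + r⁻¹ - 2 = (r - 1) ^ 2 / r by field_simp; ring]
  positivity

theorem sum_piFinset_zpow_sum [Fintype ι] [DecidableEq ι] (S : Finset α) (d : α → ℤ) {r : ℝ}
    (hr : r ≠ 0) :
    ∑ q ∈ Fintype.piFinset (fun _ : ι => S), r ^ ∑ i, d (q i)
      = (∑ x ∈ S, r ^ d x) ^ Fintype.card ι := by
  simp_rw [← prod_zpow_eq_zpow_sum₀ hr]
  rw [sum_prod_piFinset S fun _ x => r ^ d x, prod_const, card_univ]

variable [DecidableEq α]

def drift (u v x : α) : ℤ := if x = u then 1 else if x = v then -1 else 0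

theorem sum_zpow_drift {F : Finset α} {u v : α} (huv : u ≠ v) (hF : u ∈ F ↔ v ∈ F) (r : ℝ) :
    ∑ x ∈ F, r ^ drift u v x = #F + if u ∈ F then r + r⁻¹ - 2 else 0 := by
  by_cases hu : u ∈ F
  · have hv : v ∈ F.erase u := mem_erase.2 ⟨huv.symm, hF.1 hu⟩
    have hrest : ∀ x ∈ (F.erase u).erase v, r ^ drift u v x = 1 := fun x hx => by
      obtain ⟨hxv, hxu, -⟩ : x ≠ v ∧ x ≠ u ∧ x ∈ F := by simpa using hx
      simp [drift, hxu, hxv]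
    rw [← add_sum_erase _ _ hu, ← add_sum_erase _ _ hv, sum_congr rfl hrest, sum_const,
      if_pos hu]
    have h₁ := card_erase_add_one hu
    have h₂ := card_erase_add_one hv
    simp only [drift, if_true, if_neg huv.symm, nsmul_eq_mul, mul_one, zpow_one, zpow_neg]
    rw [← h₁, ← h₂]
    push_cast
    ring
  · have hzero : ∀ x ∈ F, r ^ drift u v x = 1 := fun x hx => by
      have hxu : x ≠ u := ne_of_mem_of_not_mem hx hu
      have hxv : x ≠ v := ne_of_mem_of_not_mem hx (hF.not.1 hu)
      simp [drift, hxu, hxv]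
    simp [sum_congr rfl hzero, hu]

theorem sum_zpow_ite_drift_le {F : Finset α} {u v : α} (huv : u ≠ v) (hF : u ∈ F ↔ v ∈ F)
    (c : Prop) [Decidable c] {r : ℝ} (hr : 0 < r) :
    ∑ x ∈ F, r ^ (if c then drift u v x else 0) ≤ #F + if u ∈ F then r + r⁻¹ - 2 else 0 := by
  by_cases hc : c
  · simp only [if_pos hc, sum_zpow_drift huv hF, le_refl]
  · have := add_inv_sub_two_nonneg hr
    simp only [if_neg hc, zpow_zero, sum_const, nsmul_eq_mul, mul_one]
    split_ifs <;> linarith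

/-- A player who sees only `π` of each question cannot tell `u` from `v`, so however he selects
coordinates from his view, the drift of `u` against `v` on them is a martingale. Fibering over the
view makes the moment computation a product of one-coordinate sums. -/
theorem sum_piFinset_zpow_adaptive_drift_le [Fintype ι] [DecidableEq ι] [Fintype β]
    [DecidableEq β] (S : Finset α) (π : α → β) {u v : α} (hu : u ∈ S) (hv : v ∈ S) (huv : u ≠ v)
    (hπ : π u = π v) (act : (ι → β) → ι → Prop) [∀ y i, Decidable (act y i)] {r : ℝ}
    (hr : 0 < r) :
    ∑ q ∈ Fintype.piFinset (fun _ : ι => S),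
        r ^ ∑ i, (if act (π ∘ q) i then drift u v (q i) else 0)
      ≤ (#S + (r + r⁻¹ - 2)) ^ Fintype.card ι := by
  set M : β → ℝ := fun b => #{x ∈ S | π x = b} + if u ∈ {x ∈ S | π x = b} then r + r⁻¹ - 2 else 0
  have hfiber (y : ι → β) : {q ∈ Fintype.piFinset (fun _ : ι => S) | π ∘ q = y}
      = Fintype.piFinset (fun i => {x ∈ S | π x = y i}) := by
    ext q
    simp [funext_iff, forall_and]
  have hM : ∑ b, M b = #S + (r + r⁻¹ - 2) := by
    simp only [M, sum_add_distrib, mem_filter, hu, true_and, sum_ite_eq, mem_univ, if_true]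
    rw [card_eq_sum_card_fiberwise (fun x _ => mem_univ (π x)), Nat.cast_sum]
  calc ∑ q ∈ Fintype.piFinset (fun _ : ι => S),
        r ^ ∑ i, (if act (π ∘ q) i then drift u v (q i) else 0)
      = ∑ y : ι → β, ∑ q ∈ Fintype.piFinset (fun i => {x ∈ S | π x = y i}),
          ∏ i, r ^ (if act y i then drift u v (q i) else 0) := by
        rw [← sum_fiberwise _ (π ∘ ·)]
        refine sum_congr rfl fun y _ => ?_
        rw [hfiber]
        refine sum_congr rfl fun q hq => ?_
        rw [← hfiber, mem_filter] at hq
        rw [hq.2, prod_zpow_eq_zpow_sum₀ hr.ne']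
    _ = ∑ y : ι → β, ∏ i, ∑ x ∈ {x ∈ S | π x = y i}, r ^ (if act y i then drift u v x else 0) := by
        simp_rw [prod_univ_sum]
    _ ≤ ∑ y : ι → β, ∏ i, M (y i) := by
        refine sum_le_sum fun y _ => prod_le_prod (fun i _ => sum_nonneg fun x _ => ?_) ?_
        · exact (zpow_pos hr _).le
        · intro i _
          refine sum_zpow_ite_drift_le huv ?_ _ hr
          simp [hu, hv, hπ]
    _ = (#S + (r + r⁻¹ - 2)) ^ Fintype.card ι := by
        rw [← Fintype.prod_sum, prod_const, card_univ, hM]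

end General

theorem mul_pow_le_div_pow {N t B w : ℝ} {n : ℕ} (ht : 0 < t) (hw : 0 ≤ w)
    (h : N * t ^ n ≤ B ^ n) : N * w ^ n ≤ (w * B / t) ^ n := by
  rw [div_pow, mul_pow, le_div_iff₀ (pow_pos ht n)]
  calc N * w ^ n * t ^ n = w ^ n * (N * t ^ n) := by ring
    _ ≤ w ^ n * B ^ n := by gcongr

theorem one_sub_pow_le_exp_neg_mul {c : ℝ} (hc : c ≤ 1) (n : ℕ) :
    (1 - c) ^ n ≤ Real.exp (-c * n) := by
  rw [mul_comm, Real.exp_nat_mul]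
  exact pow_le_pow_left₀ (by linarith) (Real.one_sub_le_exp_neg c) n

section ThreeQuestions

variable {α β : Type*} [DecidableEq α] {S : Finset α}

theorem card_filter_many_ne_mul_le (hS : #S = 3) {u : α} (hu : u ∈ S) (n : ℕ) :
    (#{q ∈ Fintype.piFinset (fun _ : Fin n => S) |
        (23 * n : ℤ) ≤ 30 * ∑ i, if q i = u then 0 else 1} : ℝ) * (1 / 3) ^ n
      ≤ (1 - (10 : ℝ) ^ (-(7 : ℤ))) ^ n := by
  set r : ℝ := 101 / 100
  have hmgf : ∑ x ∈ S, (r ^ (30 : ℤ)) ^ (if x = u then (0 : ℤ) else 1) = 1 + 2 * r ^ (30 : ℤ) := by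
    rw [← add_sum_erase _ _ hu, sum_congr rfl fun x hx => by rw [if_neg (ne_of_mem_erase hx)],
      sum_const, card_erase_of_mem hu, hS]
    norm_num
  have hmarkov := card_filter_mul_zpow_le_sum (Fintype.piFinset (fun _ : Fin n => S))
    (fun q => 30 * ∑ i, if q i = u then 0 else 1) (23 * n) (r := r) (by norm_num [r])
  simp_rw [zpow_mul] at hmarkov
  rw [sum_piFinset_zpow_sum S (fun x => if x = u then 0 else 1) (by positivity), hmgf,
    Fintype.card_fin, zpow_natCast] at hmarkov
  refine (mul_pow_le_div_pow (by positivity) (by norm_num) hmarkov).trans ?_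
  exact pow_le_pow_left₀ (by positivity) (by norm_num [r]) n

theorem card_filter_adaptive_drift_mul_le [Fintype β] [DecidableEq β] (hS : #S = 3) (π : α → β)
    {u v : α} (hu : u ∈ S) (hv : v ∈ S) (huv : u ≠ v) (hπ : π u = π v) {n : ℕ}
    (act : (Fin n → β) → Fin n → Prop) [∀ y i, Decidable (act y i)] :
    (#{q ∈ Fintype.piFinset (fun _ : Fin n => S) |
        (n : ℤ) ≤ 10 * ∑ i, if act (π ∘ q) i then drift u v (q i) else 0} : ℝ) * (1 / 3) ^ n
      ≤ (1 - (10 : ℝ) ^ (-(7 : ℤ))) ^ n := by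
  set r : ℝ := 51 / 50
  have hmarkov := card_filter_mul_zpow_le_sum (Fintype.piFinset (fun _ : Fin n => S))
    (fun q => 10 * ∑ i, if act (π ∘ q) i then drift u v (q i) else 0) n (r := r)
    (by norm_num [r])
  simp_rw [zpow_mul] at hmarkov
  have hmgf := sum_piFinset_zpow_adaptive_drift_le S π hu hv huv hπ act
    (r := r ^ (10 : ℤ)) (by positivity)
  rw [hS, Fintype.card_fin] at hmgf
  rw [zpow_natCast] at hmarkov
  refine (mul_pow_le_div_pow (by positivity) (by norm_num) (hmarkov.trans hmgf)).trans ?_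
  exact pow_le_pow_left₀ (by positivity) (by norm_num [r]) n

end ThreeQuestions

section AntiCorrelationGame

def AntiCorrWin (x : Bool × Bool × Bool) (a b c : Bool) : Prop :=
  (if x.1 then 1 else 0) * (if a then 1 else 0) + (if x.2.1 then 1 else 0) * (if b then 1 else 0)
    + (if x.2.2 then 1 else 0) * (if c then 1 else 0) = 1

instance (x : Bool × Bool × Bool) (a b c : Bool) : Decidable (AntiCorrWin x a b c) :=
  inferInstanceAs (Decidable (_ = 1))

def antiCorrQuestions : Finset (Bool × Bool × Bool) :=
  {(false, true, true), (true, false, true), (true, true, false)}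

theorem card_antiCorrQuestions : #antiCorrQuestions = 3 := rfl

theorem one_le_ne_add_drift_add_drift_add_loss {x : Bool × Bool × Bool}
    (hx : x ∈ antiCorrQuestions) (a b c : Bool) :
    (1 : ℤ) ≤ (if x = (false, true, true) then 0 else 1)
      + (if b = a then drift (false, true, true) (true, true, false) x else 0)
      + (if c = a then drift (false, true, true) (true, false, true) x else 0)
      + (if ¬AntiCorrWin x a b c then 1 else 0) := by
  simp only [antiCorrQuestions, mem_insert, mem_singleton] at hx
  rcases hx with rfl | rfl | rfl <;> revert a b c <;> decide

theorem events_of_many_antiCorrWins {n : ℕ} (a b c : Fin n → Bool) {q : Fin n → Bool × Bool × Bool}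
    (hq : q ∈ Fintype.piFinset fun _ => antiCorrQuestions)
    (hwin : (0.99 : ℝ) * n < #{i | AntiCorrWin (q i) (a i) (b i) (c i)}) :
    (23 * n : ℤ) ≤ 30 * ∑ i, (if q i = (false, true, true) then 0 else 1)
    ∨ (n : ℤ) ≤ 10 * ∑ i,
        (if b i = a i then drift (false, true, true) (true, true, false) (q i) else 0)
    ∨ (n : ℤ) ≤ 10 * ∑ i,
        (if c i = a i then drift (false, true, true) (true, false, true) (q i) else 0) := by
  rw [Fintype.mem_piFinset] at hq
  have hsum := sum_le_sum fun i (_ : i ∈ univ) =>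
    one_le_ne_add_drift_add_drift_add_loss (hq i) (a i) (b i) (c i)
  simp only [sum_const, card_univ, Fintype.card_fin, nsmul_eq_mul, mul_one, sum_add_distrib,
    ← natCast_card_filter] at hsum
  have hcard := card_filter_add_card_filter_not (s := univ)
    fun i => AntiCorrWin (q i) (a i) (b i) (c i)
  rw [card_univ, Fintype.card_fin] at hcard
  have hwin' : 99 * n < 100 * #{i | AntiCorrWin (q i) (a i) (b i) (c i)} := by
    exact_mod_cast (by linarith : (99 * n : ℝ) < 100 * #{i | AntiCorrWin (q i) (a i) (b i) (c i)})
  omega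

end AntiCorrelationGame

/-- In the n-fold anti-correlation game, if the first player's answer is a
fixed string `a`, then for any strategies `g, h` of the other two players, the probability
(over questions i.i.d. uniform on the weight-2 triples) of winning more than `0.99 n`
coordinates is at most `3·exp(−10⁻⁷ n)`. -/
theorem stmt_6 (n : ℕ) (a : Fin n → Bool)
    (g h : (Fin n → Bool) → (Fin n → Bool)) :
    let b2n : Bool → ℕ := fun b => if b then 1 else 0
    let S : Finset (Bool × Bool × Bool) :=
      {(false, true, true), (true, false, true), (true, true, false)}
    (∑ q ∈ Fintype.piFinset (fun _ : Fin n => S),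
        if (0.99 : ℝ) * n <
            ((Finset.univ.filter fun i : Fin n =>
              b2n (q i).1 * b2n (a i)
                + b2n (q i).2.1 * b2n (g (fun j => (q j).2.1) i)
                + b2n (q i).2.2 * b2n (h (fun j => (q j).2.2) i) = 1).card : ℝ)
        then ((1:ℝ)/3)^n else 0)
      ≤ 3 * Real.exp (-(10:ℝ)^(-(7:ℤ)) * n) := by
  intro b2n S
  rw [← sum_filter, sum_const, nsmul_eq_mul]
  have hA := card_filter_many_ne_mul_le card_antiCorrQuestions (u := (false, true, true))
    (by decide) n
  have hg := card_filter_adaptive_drift_mul_le card_antiCorrQuestions (fun x => x.2.1)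
    (u := (false, true, true)) (v := (true, true, false)) (by decide) (by decide) (by decide) rfl
    fun y i => g y i = a i
  have hh := card_filter_adaptive_drift_mul_le card_antiCorrQuestions (fun x => x.2.2)
    (u := (false, true, true)) (v := (true, false, true)) (by decide) (by decide) (by decide) rfl
    fun y i => h y i = a i
  refine (card_filter_mul_le_of_imp_or (by positivity) (fun q hq hwin =>
    events_of_many_antiCorrWins a (g fun j => (q j).2.1) (h fun j => (q j).2.2) hq hwin)
    hA hg hh).trans ?_
  gcongr
  exact one_sub_pow_le_exp_neg_mul (by norm_num) n
end

section
/- Let P_V = P_{V_1} × ⋯ × P_{V_n} be a product distribution over 𝒱^n and let W be an event with P_V(W) > 0. Then (1/n) Σ_{i=1}^n ‖P_{V_i|W} − P_{V_i}‖₁ ≤ C · sqrt((1/n) · log₂(1/P_V(W))) for some absolute constant C (e.g., C = sqrt(2 ln 2) suffices). -/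
open Real Set Finset


noncomputable def Faux (t : ℝ) : ℝ := t * Real.log t - t + 1 - 3/2 * ((t-1)^2 / (t+2))
noncomputable def Gaux (t : ℝ) : ℝ := Real.log t - 3/2 * ((t-1)*(t+5) / (t+2)^2)

lemma hasDerivAt_Faux {t : ℝ} (ht : 0 < t) : HasDerivAt Faux (Gaux t) t := by
  have h2 : t + 2 ≠ 0 := by linarith
  have h1 : HasDerivAt (fun x : ℝ => x * Real.log x) (Real.log t + 1) t :=
    Real.hasDerivAt_mul_log ht.ne'
  have h3 : HasDerivAt (fun x : ℝ => (x-1)^2 / (x+2))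
      ((2*(t-1)*(t+2) - (t-1)^2 * 1) / (t+2)^2) t := by
    have hu : HasDerivAt (fun x : ℝ => (x-1)^2) (2*(t-1)) t := by
      simpa using ((hasDerivAt_id t).sub_const 1).fun_pow 2
    have hv : HasDerivAt (fun x : ℝ => x + 2) 1 t := (hasDerivAt_id t).add_const 2
    simpa using hu.fun_div hv h2
  have h := ((h1.sub (hasDerivAt_id t)).add_const 1).sub (h3.const_mul (3/2))
  have heq : Gaux t = Real.log t + 1 - 1 - 3/2 * ((2*(t-1)*(t+2) - (t-1)^2 * 1) / (t+2)^2) := by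
    simp only [Gaux]; field_simp; ring
  rw [heq]
  exact h.congr_of_eventuallyEq (Filter.Eventually.of_forall fun x => by simp [Faux])

lemma hasDerivAt_Gaux {t : ℝ} (ht : 0 < t) : HasDerivAt Gaux (1/t - 27/(t+2)^3) t := by
  have h2 : t + 2 ≠ 0 := by linarith
  have h2' : (t+2)^2 ≠ 0 := pow_ne_zero _ h2
  have h1 : HasDerivAt Real.log (1/t) t := by
    simpa [one_div] using Real.hasDerivAt_log ht.ne'
  have h3 : HasDerivAt (fun x : ℝ => (x-1)*(x+5) / (x+2)^2)
      (((2*t+4)*(t+2)^2 - (t-1)*(t+5) * (2*(t+2))) / ((t+2)^2)^2) t := by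
    have hu : HasDerivAt (fun x : ℝ => (x-1)*(x+5)) (2*t+4) t := by
      have := (((hasDerivAt_id t).sub_const 1).fun_mul ((hasDerivAt_id t).add_const 5))
      exact this.congr_deriv (by simp only [id]; ring)
    have hv : HasDerivAt (fun x : ℝ => (x+2)^2) (2*(t+2)) t := by
      simpa using ((hasDerivAt_id t).add_const 2).fun_pow 2
    simpa using hu.fun_div hv h2'
  have h := h1.sub (h3.const_mul (3/2))
  have heq : 1/t - 27/(t+2)^3
      = 1/t - 3/2 * (((2*t+4)*(t+2)^2 - (t-1)*(t+5) * (2*(t+2))) / ((t+2)^2)^2) := by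
    field_simp; ring
  rw [heq]
  exact h.congr_of_eventuallyEq (Filter.Eventually.of_forall fun x => by simp [Gaux])

lemma Gaux_one : Gaux 1 = 0 := by simp [Gaux]

lemma Gaux_monoOn : MonotoneOn Gaux (Set.Ioi (0:ℝ)) := by
  have hdiff : ∀ x ∈ Set.Ioi (0:ℝ), HasDerivAt Gaux (1/x - 27/(x+2)^3) x :=
    fun x hx => hasDerivAt_Gaux hx
  apply monotoneOn_of_deriv_nonneg (convex_Ioi 0)
  · exact fun x hx => (hdiff x hx).differentiableAt.continuousAt.continuousWithinAt
  · intro x hx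
    rw [interior_Ioi] at hx
    exact (hdiff x hx).differentiableAt.differentiableWithinAt
  · intro x hx
    rw [interior_Ioi] at hx
    rw [(hdiff x hx).deriv]
    have hx0 : (0:ℝ) < x := hx
    have h2 : (0:ℝ) < x + 2 := by linarith
    rw [sub_nonneg, div_le_div_iff₀ (by positivity) hx0]
    nlinarith [sq_nonneg (x-1), mul_pos hx0 h2, sq_nonneg x]

lemma Faux_nonneg {t : ℝ} (ht : 0 < t) : 0 ≤ Faux t := by
  have hF1 : Faux 1 = 0 := by norm_num [Faux]
  rcases le_total 1 t with h | h
  · have hmono : MonotoneOn Faux (Set.Ici (1:ℝ)) := by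
      apply monotoneOn_of_deriv_nonneg (convex_Ici 1)
      · exact fun x hx => (hasDerivAt_Faux (by exact lt_of_lt_of_le one_pos hx)).differentiableAt.continuousAt.continuousWithinAt
      · intro x hx
        rw [interior_Ici] at hx
        exact (hasDerivAt_Faux (lt_trans one_pos hx)).differentiableAt.differentiableWithinAt
      · intro x hx
        rw [interior_Ici] at hx
        rw [(hasDerivAt_Faux (lt_trans one_pos hx)).deriv]
        have := Gaux_monoOn (Set.mem_Ioi.mpr one_pos) (Set.mem_Ioi.mpr (lt_trans one_pos hx)) hx.le
        rw [Gaux_one] at this; exact this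
    have := hmono (Set.mem_Ici.mpr le_rfl) (Set.mem_Ici.mpr h) h
    rw [hF1] at this; exact this
  · have hanti : AntitoneOn Faux (Set.Icc t 1) := by
      apply antitoneOn_of_deriv_nonpos (convex_Icc t 1)
      · exact fun x hx => (hasDerivAt_Faux (lt_of_lt_of_le ht hx.1)).differentiableAt.continuousAt.continuousWithinAt
      · intro x hx
        rw [interior_Icc] at hx
        exact (hasDerivAt_Faux (lt_of_lt_of_le ht hx.1.le)).differentiableAt.differentiableWithinAt
      · intro x hx
        rw [interior_Icc] at hx
        rw [(hasDerivAt_Faux (lt_of_lt_of_le ht hx.1.le)).deriv]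
        have := Gaux_monoOn (Set.mem_Ioi.mpr (lt_of_lt_of_le ht hx.1.le)) (Set.mem_Ioi.mpr one_pos) hx.2.le
        rw [Gaux_one] at this; exact this
    have := hanti (Set.mem_Icc.mpr ⟨le_rfl, h⟩) (Set.mem_Icc.mpr ⟨h, le_rfl⟩) h
    rw [hF1] at this; exact this


lemma Faux_nonneg' {t : ℝ} (ht : 0 < t) :
    0 ≤ t * Real.log t - t + 1 - 3/2 * ((t-1)^2 / (t+2)) := Faux_nonneg ht

/-- pointwise refined Gibbs inequality -/
lemma pt_ineq {a b : ℝ} (ha : 0 ≤ a) (hb : 0 ≤ b) (h : b = 0 → a = 0) :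
    3*(a-b)^2/(2*(a+2*b)) ≤ a * Real.log (a/b) - a + b := by
  rcases eq_or_lt_of_le hb with hb0 | hb0
  · have ha0 : a = 0 := h hb0.symm
    simp [ha0, ← hb0]
  rcases eq_or_lt_of_le ha with ha0 | ha0
  · rw [← ha0]
    simp only [zero_sub, sub_zero, zero_mul, zero_add, zero_sub, neg_add_eq_sub]
    rw [div_le_iff₀ (by positivity)]
    nlinarith [sq_nonneg b]
  · have hb' : b ≠ 0 := hb0.ne'
    have key := Faux_nonneg' (t := a/b) (by positivity)
    have hab : a/b * Real.log (a/b) - a/b + 1 - 3/2 * ((a/b-1)^2 / (a/b+2))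
        = (a * Real.log (a/b) - a + b - 3*(a-b)^2/(2*(a+2*b))) / b := by
      have h2 : a + 2*b ≠ 0 := by positivity
      field_simp
    rw [hab] at key
    have := (div_nonneg_iff.mp key)
    rcases this with ⟨h1, _⟩ | ⟨_, h2⟩
    · linarith
    · linarith

lemma gibbs_pt {a b : ℝ} (ha : 0 ≤ a) (hb : 0 ≤ b) (h : b = 0 → a = 0) :
    a - b ≤ a * Real.log (a/b) := by
  have h1 := pt_ineq ha hb h
  have h2 : 0 ≤ 3*(a-b)^2/(2*(a+2*b)) := by positivity
  linarith

/-- splitting the log of a quotient, with junk-value conventions -/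
lemma mul_log_div_aux {a b : ℝ} (ha : 0 ≤ a) (h : a ≠ 0 → b ≠ 0) :
    a * Real.log (a/b) = a * Real.log a - a * Real.log b := by
  rcases eq_or_ne a 0 with h0 | h0
  · simp [h0]
  · rw [Real.log_div h0 (h h0), mul_sub]

lemma gibbs_sum {α : Type*} (s : Finset α) (f g : α → ℝ)
    (hf0 : ∀ x ∈ s, 0 ≤ f x) (hg0 : ∀ x ∈ s, 0 ≤ g x)
    (hsum : ∑ x ∈ s, g x ≤ ∑ x ∈ s, f x)
    (hsupp : ∀ x ∈ s, g x = 0 → f x = 0) :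
    0 ≤ ∑ x ∈ s, f x * Real.log (f x / g x) := by
  have h1 : ∑ x ∈ s, (f x - g x) ≤ ∑ x ∈ s, f x * Real.log (f x / g x) :=
    Finset.sum_le_sum fun x hx => gibbs_pt (hf0 x hx) (hg0 x hx) (hsupp x hx)
  rw [Finset.sum_sub_distrib] at h1
  linarith

lemma pinsker_sum {α : Type*} (s : Finset α) (f g : α → ℝ)
    (hf0 : ∀ x ∈ s, 0 ≤ f x) (hg0 : ∀ x ∈ s, 0 ≤ g x)
    (hf1 : ∑ x ∈ s, f x = 1) (hg1 : ∑ x ∈ s, g x = 1)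
    (hsupp : ∀ x ∈ s, g x = 0 → f x = 0) :
    (∑ x ∈ s, |f x - g x|)^2 ≤ 2 * ∑ x ∈ s, f x * Real.log (f x / g x) := by
  set K := ∑ x ∈ s, f x * Real.log (f x / g x) with hK
  have step1 : ∑ x ∈ s, (f x - g x)^2/(f x + 2*g x) ≤ (2/3) * K := by
    have h := Finset.sum_le_sum fun x hx => pt_ineq (hf0 x hx) (hg0 x hx) (hsupp x hx)
    have h2 : ∑ i ∈ s, (f i * Real.log (f i/g i) - f i + g i) = K - 1 + 1 := by
      rw [Finset.sum_add_distrib, Finset.sum_sub_distrib, hf1, hg1]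
    rw [h2] at h
    have heq : ∑ x ∈ s, 3*(f x - g x)^2/(2*(f x + 2*g x))
        = (3/2) * ∑ x ∈ s, (f x - g x)^2/(f x + 2*g x) := by
      rw [Finset.mul_sum]
      exact Finset.sum_congr rfl fun x _ => by
        rw [div_mul_eq_div_div_swap, mul_div_assoc]
        ring
    rw [heq] at h
    linarith
  have cs := Finset.sum_mul_sq_le_sq_mul_sq s
      (fun x => |f x - g x| / Real.sqrt (f x + 2*g x))
      (fun x => Real.sqrt (f x + 2*g x))
  have hprod : ∀ x ∈ s, |f x - g x| / Real.sqrt (f x + 2*g x) * Real.sqrt (f x + 2*g x)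
      = |f x - g x| := by
    intro x hx
    rcases eq_or_lt_of_le (by nlinarith [hf0 x hx, hg0 x hx] : (0:ℝ) ≤ f x + 2*g x) with h0 | h0
    · have hf : f x = 0 := by nlinarith [hf0 x hx, hg0 x hx]
      have hg : g x = 0 := by nlinarith [hf0 x hx, hg0 x hx]
      simp [hf, hg]
    · rw [div_mul_cancel₀]
      exact (Real.sqrt_pos.mpr h0).ne'
  have hsq1 : ∀ x ∈ s, (|f x - g x| / Real.sqrt (f x + 2*g x))^2
      = (f x - g x)^2 / (f x + 2*g x) := by
    intro x hx
    rw [div_pow, sq_abs, Real.sq_sqrt (by nlinarith [hf0 x hx, hg0 x hx])]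
  have hsq2 : ∀ x ∈ s, (Real.sqrt (f x + 2*g x))^2 = f x + 2*g x := by
    intro x hx
    exact Real.sq_sqrt (by nlinarith [hf0 x hx, hg0 x hx])
  rw [Finset.sum_congr rfl hprod, Finset.sum_congr rfl hsq1, Finset.sum_congr rfl hsq2] at cs
  have hsum3 : ∑ x ∈ s, (f x + 2*g x) = 3 := by
    rw [Finset.sum_add_distrib, hf1, ← Finset.mul_sum, hg1]; norm_num
  rw [hsum3] at cs
  calc (∑ x ∈ s, |f x - g x|)^2 ≤ (∑ x ∈ s, (f x - g x)^2/(f x + 2*g x)) * 3 := cs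
    _ ≤ (2/3) * K * 3 := by nlinarith [step1]
    _ = 2 * K := by ring



/-- For a product distribution `P_V = P_{V_1} × ⋯ × P_{V_n}` over `𝒱ⁿ` and
an event `W` of positive probability, the average L1 distance between the conditioned
marginals and the original marginals is at most
`C·sqrt((1/n)·log₂(1/P_V(W)))`, with `C = sqrt(2 ln 2)`. -/
theorem stmt_7 (n : ℕ) (hn : 0 < n) (V : Type*) [Fintype V] [DecidableEq V]
    (p : Fin n → V → ℝ) (hp0 : ∀ i v, 0 ≤ p i v) (hp1 : ∀ i, ∑ v, p i v = 1)
    (W : Finset (Fin n → V))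
    (hW : 0 < ∑ w ∈ W, ∏ i, p i (w i)) :
    (1 / n : ℝ) * ∑ i, ∑ v,
        |(∑ w ∈ W.filter fun w => w i = v, ∏ j, p j (w j)) /
            (∑ w ∈ W, ∏ j, p j (w j)) - p i v|
      ≤ Real.sqrt (2 * Real.log 2) *
        Real.sqrt ((1 / n) * Real.logb 2 (1 / ∑ w ∈ W, ∏ j, p j (w j))) := by
  classical
  set q : (Fin n → V) → ℝ := fun w => ∏ j, p j (w j) with hqdef
  set Z : ℝ := ∑ w ∈ W, q w with hZdef
  have hZpos : 0 < Z := hW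
  set m : Fin n → V → ℝ := fun i v => (∑ w ∈ W.filter fun w => w i = v, q w) / Z with hmdef
  have hq0 : ∀ w, 0 ≤ q w := fun w => Finset.prod_nonneg fun j _ => hp0 j (w j)
  have hm0 : ∀ i v, 0 ≤ m i v := fun i v =>
    div_nonneg (Finset.sum_nonneg fun w _ => hq0 w) hZpos.le
  -- sum over all of V^n of q is 1
  have hqtot : ∑ w : Fin n → V, q w = 1 := by
    rw [hqdef, ← Fintype.prod_sum (fun i v => p i v)]
    rw [Finset.prod_eq_one fun i _ => hp1 i]
  have hZ1 : Z ≤ 1 := by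
    rw [hZdef, ← hqtot]
    exact Finset.sum_le_sum_of_subset_of_nonneg (Finset.subset_univ W)
      (fun w _ _ => hq0 w)
  -- marginal sums to 1
  have hfib : ∀ (i : Fin n) (f : (Fin n → V) → ℝ),
      ∑ v, ∑ w ∈ W.filter fun w => w i = v, f w = ∑ w ∈ W, f w :=
    fun i f => Finset.sum_fiberwise_of_maps_to (fun w _ => Finset.mem_univ (w i)) f
  have hm1 : ∀ i, ∑ v, m i v = 1 := by
    intro i
    rw [hmdef]
    simp only
    rw [← Finset.sum_div, hfib i q, ← hZdef, div_self hZpos.ne']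
  -- support condition
  have hsupp : ∀ i v, p i v = 0 → m i v = 0 := by
    intro i v hpv
    rw [hmdef]
    simp only
    rw [Finset.sum_eq_zero, zero_div]
    intro w hw
    have : w i = v := (Finset.mem_filter.mp hw).2
    exact Finset.prod_eq_zero (Finset.mem_univ i) (this ▸ hpv)
  -- each atom is below its marginal
  have hatom : ∀ (w : Fin n → V), w ∈ W → ∀ i, q w / Z ≤ m i (w i) := by
    intro w hw i
    rw [hmdef]
    simp only
    gcongr
    exact Finset.single_le_sum (fun w _ => hq0 w) (Finset.mem_filter.mpr ⟨hw, rfl⟩)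
  -- the conditional distribution P and the product of marginals r
  set P : (Fin n → V) → ℝ := fun w => if w ∈ W then q w / Z else 0 with hPdef
  set r : (Fin n → V) → ℝ := fun w => ∏ i, m i (w i) with hrdef
  have hP0 : ∀ w, 0 ≤ P w := by
    intro w
    rw [hPdef]
    dsimp only
    split
    · exact div_nonneg (hq0 w) hZpos.le
    · exact le_refl 0
  have hr0 : ∀ w, 0 ≤ r w := fun w => Finset.prod_nonneg fun i _ => hm0 i (w i)
  have hPW : ∀ (f : (Fin n → V) → ℝ),
      ∑ w : Fin n → V, P w * f w = ∑ w ∈ W, (q w / Z) * f w := by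
    intro f
    rw [hPdef]
    simp only [ite_mul, zero_mul]
    rw [Finset.sum_ite_mem, Finset.univ_inter]
  have hPsum : ∑ w : Fin n → V, P w = 1 := by
    have h := hPW (fun _ => 1)
    simp only [mul_one] at h
    rw [h, ← Finset.sum_div, ← hZdef, div_self hZpos.ne']
  have hrsum : ∑ w : Fin n → V, r w = 1 := by
    rw [hrdef]
    rw [← Fintype.prod_sum (fun i v => m i v)]
    exact Finset.prod_eq_one fun i _ => hm1 i
  have hPr : ∀ w, P w ≠ 0 → 0 < r w := by
    intro w hPw
    have hw : w ∈ W := by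
      by_contra h
      rw [hPdef] at hPw
      simp [h] at hPw
    have hqZ : 0 < q w / Z := by
      rcases lt_or_eq_of_le (div_nonneg (hq0 w) hZpos.le) with h | h
      · exact h
      · exfalso; apply hPw; rw [hPdef]; simp [hw, ← h]
    exact Finset.prod_pos fun i _ => lt_of_lt_of_le hqZ (hatom w hw i)
  -- regrouping marginal sums
  have key_m : ∀ (i : Fin n) (c : V → ℝ),
      ∑ v, m i v * c v = ∑ w ∈ W, (q w / Z) * c (w i) := by
    intro i c
    rw [hmdef]
    simp only
    calc ∑ v, (∑ w ∈ W.filter fun w => w i = v, q w) / Z * c v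
        = ∑ v, ∑ w ∈ W.filter fun w => w i = v, (q w / Z * c (w i)) := by
          refine Finset.sum_congr rfl fun v _ => ?_
          rw [Finset.sum_div, Finset.sum_mul]
          refine Finset.sum_congr rfl fun w hw => ?_
          rw [(Finset.mem_filter.mp hw).2]
      _ = ∑ w ∈ W, (q w / Z) * c (w i) := hfib i _
  -- splitting the KL terms
  have hKi_split : ∀ i, ∑ v, m i v * Real.log (m i v / p i v)
      = ∑ v, m i v * Real.log (m i v) - ∑ v, m i v * Real.log (p i v) := by
    intro i
    rw [← Finset.sum_sub_distrib]
    exact Finset.sum_congr rfl fun v _ =>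
      mul_log_div_aux (hm0 i v) (fun hm hp => hm (hsupp i v hp))
  have hsum_logp : ∑ i, ∑ w ∈ W, (q w / Z) * Real.log (p i (w i))
      = ∑ w ∈ W, (q w / Z) * Real.log (q w) := by
    rw [Finset.sum_comm]
    refine Finset.sum_congr rfl fun w hw => ?_
    rcases eq_or_ne (q w) 0 with h0 | h0
    · simp [h0]
    · rw [← Finset.mul_sum]
      congr 1
      rw [hqdef]
      simp only
      refine (Real.log_prod fun j _ => ?_).symm
      intro h
      exact h0 (by rw [hqdef]; exact Finset.prod_eq_zero (Finset.mem_univ j) h)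
  have hsum_logm : ∑ i, ∑ w ∈ W, (q w / Z) * Real.log (m i (w i))
      = ∑ w ∈ W, (q w / Z) * Real.log (r w) := by
    rw [Finset.sum_comm]
    refine Finset.sum_congr rfl fun w hw => ?_
    rcases eq_or_ne (q w) 0 with h0 | h0
    · simp [h0]
    · rw [← Finset.mul_sum]
      congr 1
      rw [hrdef]
      simp only
      refine (Real.log_prod fun i _ => ?_).symm
      have hqZ : 0 < q w / Z := div_pos (lt_of_le_of_ne (hq0 w) (Ne.symm h0)) hZpos
      exact (lt_of_lt_of_le hqZ (hatom w hw i)).ne'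
  -- Gibbs inequality : KL(P ‖ r) ≥ 0
  have hgibbs : 0 ≤ ∑ w : Fin n → V, P w * Real.log (P w / r w) := by
    refine gibbs_sum Finset.univ P r (fun w _ => hP0 w) (fun w _ => hr0 w) ?_ ?_
    · rw [hPsum, hrsum]
    · intro w _ hrw
      by_contra hPw
      exact absurd hrw (hPr w hPw).ne'
  have hg_split : ∑ w : Fin n → V, P w * Real.log (P w / r w)
      = ∑ w : Fin n → V, P w * Real.log (P w) - ∑ w : Fin n → V, P w * Real.log (r w) := by
    rw [← Finset.sum_sub_distrib]
    exact Finset.sum_congr rfl fun w _ =>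
      mul_log_div_aux (hP0 w) (fun hP => (hPr w hP).ne')
  have hPlogP : ∑ w : Fin n → V, P w * Real.log (P w)
      = ∑ w ∈ W, (q w / Z) * Real.log (q w / Z) := by
    have h : ∀ w : Fin n → V, P w * Real.log (P w)
        = if w ∈ W then (q w / Z) * Real.log (q w / Z) else 0 := by
      intro w
      rw [hPdef]
      dsimp only
      split <;> simp
    rw [Finset.sum_congr rfl fun w _ => h w, Finset.sum_ite_mem, Finset.univ_inter]
  have hPlogr : ∑ w : Fin n → V, P w * Real.log (r w)
      = ∑ w ∈ W, (q w / Z) * Real.log (r w) := hPW _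
  -- the key entropy inequality over W
  have hkey : ∑ w ∈ W, (q w / Z) * Real.log (r w)
      ≤ ∑ w ∈ W, (q w / Z) * Real.log (q w / Z) := by
    rw [hg_split, hPlogP, hPlogr] at hgibbs
    linarith
  have hlogZ : ∑ w ∈ W, (q w / Z) * Real.log (q w / Z)
      = ∑ w ∈ W, (q w / Z) * Real.log (q w) - Real.log Z := by
    have h : ∀ w ∈ W, (q w / Z) * Real.log (q w / Z)
        = (q w / Z) * Real.log (q w) - (q w / Z) * Real.log Z := by
      intro w _
      rcases eq_or_ne (q w) 0 with h0 | h0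
      · simp [h0]
      · rw [Real.log_div h0 hZpos.ne']
        ring
    rw [Finset.sum_congr rfl h, Finset.sum_sub_distrib, ← Finset.sum_mul,
      ← Finset.sum_div, ← hZdef, div_self hZpos.ne', one_mul]
  -- superadditivity conclusion
  have hS : ∑ i, ∑ v, m i v * Real.log (m i v / p i v) ≤ Real.log (1 / Z) := by
    have e1 : ∑ i, ∑ v, m i v * Real.log (m i v / p i v)
        = ∑ w ∈ W, (q w / Z) * Real.log (r w)
          - ∑ w ∈ W, (q w / Z) * Real.log (q w) := by
      rw [Finset.sum_congr rfl fun i _ => hKi_split i, Finset.sum_sub_distrib]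
      rw [Finset.sum_congr rfl fun i (_ : i ∈ Finset.univ) => key_m i (fun v => Real.log (m i v)),
        Finset.sum_congr rfl fun i (_ : i ∈ Finset.univ) => key_m i (fun v => Real.log (p i v)),
        hsum_logm, hsum_logp]
    rw [e1, one_div, Real.log_inv]
    linarith [hkey, hlogZ]
  -- Pinsker per coordinate
  have hPin : ∀ i, (∑ v, |m i v - p i v|)^2
      ≤ 2 * ∑ v, m i v * Real.log (m i v / p i v) := fun i =>
    pinsker_sum Finset.univ (m i) (p i) (fun v _ => hm0 i v) (fun v _ => hp0 i v)
      (hm1 i) (hp1 i) (fun v _ => hsupp i v)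
  have hKnn : ∀ i, 0 ≤ ∑ v, m i v * Real.log (m i v / p i v) := fun i =>
    gibbs_sum Finset.univ (m i) (p i) (fun v _ => hm0 i v) (fun v _ => hp0 i v)
      (le_of_eq ((hp1 i).trans (hm1 i).symm)) (fun v _ => hsupp i v)
  -- final assembly
  have hN : (0:ℝ) < (n:ℝ) := Nat.cast_pos.mpr hn
  have hlog1Z : 0 ≤ Real.log (1 / Z) :=
    Real.log_nonneg (by rw [le_div_iff₀ hZpos]; linarith)
  have hT0 : 0 ≤ ∑ i, ∑ v, |m i v - p i v| :=
    Finset.sum_nonneg fun i _ => Finset.sum_nonneg fun v _ => abs_nonneg _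
  have hCS : (∑ i, ∑ v, |m i v - p i v|)^2
      ≤ (n:ℝ) * ∑ i, (∑ v, |m i v - p i v|)^2 := by
    have := sq_sum_le_card_mul_sum_sq (s := (Finset.univ : Finset (Fin n)))
      (f := fun i => ∑ v, |m i v - p i v|)
    simpa using this
  have hsumsq : ∑ i, (∑ v, |m i v - p i v|)^2 ≤ 2 * Real.log (1 / Z) := by
    calc ∑ i, (∑ v, |m i v - p i v|)^2
        ≤ ∑ i, 2 * ∑ v, m i v * Real.log (m i v / p i v) :=
          Finset.sum_le_sum fun i _ => hPin i
      _ = 2 * ∑ i, ∑ v, m i v * Real.log (m i v / p i v) := by rw [Finset.mul_sum]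
      _ ≤ 2 * Real.log (1 / Z) := by linarith [hS]
  have hfinal : (1 / (n:ℝ)) * ∑ i, ∑ v, |m i v - p i v|
      ≤ Real.sqrt (2 * Real.log 2) * Real.sqrt ((1 / (n:ℝ)) * Real.logb 2 (1 / Z)) := by
    rw [← Real.sqrt_mul (by positivity : (0:ℝ) ≤ 2 * Real.log 2)]
    have hinner : 2 * Real.log 2 * (1 / (n:ℝ) * Real.logb 2 (1 / Z))
        = (2 / (n:ℝ)) * Real.log (1 / Z) := by
      rw [Real.logb]
      have hl2 : Real.log 2 ≠ 0 := (Real.log_pos one_lt_two).ne'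
      field_simp
    rw [hinner]
    rw [Real.le_sqrt (by positivity) (mul_nonneg (by positivity) hlog1Z)]
    calc (1 / (n:ℝ) * ∑ i, ∑ v, |m i v - p i v|)^2
        = (∑ i, ∑ v, |m i v - p i v|)^2 * (1 / (n:ℝ)^2) := by ring
      _ ≤ ((n:ℝ) * (2 * Real.log (1 / Z))) * (1 / (n:ℝ)^2) := by
          apply mul_le_mul_of_nonneg_right _ (by positivity)
          calc (∑ i, ∑ v, |m i v - p i v|)^2
              ≤ (n:ℝ) * ∑ i, (∑ v, |m i v - p i v|)^2 := hCS
            _ ≤ (n:ℝ) * (2 * Real.log (1 / Z)) := by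
                apply mul_le_mul_of_nonneg_left hsumsq hN.le
      _ = (2 / (n:ℝ)) * Real.log (1 / Z) := by
          field_simp
  exact hfinal
end

section
/- Let 𝒢 = (𝒳, 𝒜, Q, V) be a k-player game, and suppose y ∈ 𝒳 and j ∈ [k] are such that y is the unique element of the support of Q whose j-th coordinate is y^j. Then there exists a predicate V' with: (a) V'(y, a) = V'(y, b) whenever a^{−j} = b^{−j}; (b) val(𝒢^{⊗n}) ≤ val(𝒢'^{⊗n}) for all n, where 𝒢' = (𝒳, 𝒜, Q, V'); and (c) val(𝒢') = val(𝒢). -/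
noncomputable section

/-- Value of a k-player game: supremum over deterministic product strategies of the
winning probability. -/
def gameVal {k : ℕ} {X A : Fin k → Type} [∀ j, Fintype (X j)] [∀ j, Fintype (A j)]
    (Q : (∀ j, X j) → ℝ) (V : (∀ j, X j) → (∀ j, A j) → Bool) : ℝ :=
  ⨆ f : ∀ j, X j → A j, ∑ x, Q x * (if V x (fun j => f j (x j)) then (1:ℝ) else 0)

/-- Value of the n-fold parallel repetition of a k-player game. -/
def repVal {k : ℕ} {X A : Fin k → Type} [∀ j, Fintype (X j)] [∀ j, Fintype (A j)]
    (Q : (∀ j, X j) → ℝ) (V : (∀ j, X j) → (∀ j, A j) → Bool) (n : ℕ) : ℝ :=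
  ⨆ F : ∀ j, (Fin n → X j) → (Fin n → A j),
    ∑ x : Fin n → ∀ j, X j,
      (∏ i, Q (x i)) *
        (if ∀ i, V (x i) (fun j => F j (fun i' => x i' j) i) then (1:ℝ) else 0)

/-! Raising player `j`'s answer on question `y` to an optimal one cannot lower the winning
probability of any strategy, in any number of repetitions. Conversely, when `y j` pins down
the question `y` on the support of `Q`, a single-shot strategy for the relaxed predicate is
matched by a strategy for `V` that changes only player `j`'s answer to `y j`, and that change
is invisible on every other question in the support. -/

theorem Finset.sum_mul_ite_le_sum_mul_ite {ι : Type*} [Fintype ι] {w : ι → ℝ}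
    (hw : ∀ i, 0 ≤ w i) {p q : ι → Prop} [DecidablePred p] [DecidablePred q]
    (hpq : ∀ i, 0 < w i → p i → q i) :
    ∑ i, w i * (if p i then 1 else 0) ≤ ∑ i, w i * (if q i then 1 else 0) := by
  refine Finset.sum_le_sum fun i _ => ?_
  rcases (hw i).eq_or_lt with hi | hi
  · simp [← hi]
  · gcongr
    split_ifs <;> simp_all

section OptimizeAnswer

variable {k : ℕ} {X A : Fin k → Type} {V : (∀ j, X j) → (∀ j, A j) → Bool}
  {y : ∀ j, X j} {j : Fin k}

open Classical in
/-- The predicate `V'` of the statement, with `V'(y, a)` the maximum of `V(y, b)` over the `b`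
that differ from `a` only in player `j`'s answer. -/
def optimizeAnswerAt (V : (∀ j, X j) → (∀ j, A j) → Bool) (y : ∀ j, X j) (j : Fin k) :
    (∀ j, X j) → (∀ j, A j) → Bool :=
  fun x a => if x = y then decide (∃ c, V y (Function.update a j c) = true) else V x a

theorem optimizeAnswerAt_self (a : ∀ j, A j) :
    optimizeAnswerAt V y j y a = true ↔ ∃ c, V y (Function.update a j c) = true := by
  simp [optimizeAnswerAt]

theorem optimizeAnswerAt_of_ne {x : ∀ j, X j} (hx : x ≠ y) :
    optimizeAnswerAt V y j x = V x := by
  funext a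
  simp [optimizeAnswerAt, hx]

theorem optimizeAnswerAt_self_congr {a b : ∀ j, A j} (hab : ∀ j', j' ≠ j → a j' = b j') :
    optimizeAnswerAt V y j y a = optimizeAnswerAt V y j y b := by
  have hupd : ∀ c, Function.update a j c = Function.update b j c := fun c => by
    funext j'
    by_cases hj' : j' = j
    · subst hj'; simp
    · simp [hj', hab j' hj']
  rw [Bool.eq_iff_iff, optimizeAnswerAt_self, optimizeAnswerAt_self]
  simp only [hupd]

theorem le_optimizeAnswerAt {x : ∀ j, X j} {a : ∀ j, A j} (h : V x a = true) :
    optimizeAnswerAt V y j x a = true := by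
  by_cases hx : x = y
  · subst hx
    exact (optimizeAnswerAt_self a).2 ⟨a j, by rwa [Function.update_eq_self]⟩
  · rwa [optimizeAnswerAt_of_ne hx]

end OptimizeAnswer

section Game

variable {k : ℕ} {X A : Fin k → Type} [∀ j, Fintype (X j)] [∀ j, Fintype (A j)]
  {Q : (∀ j, X j) → ℝ} {V W : (∀ j, X j) → (∀ j, A j) → Bool} {y : ∀ j, X j} {j : Fin k}

theorem gameVal_le_of_forall_exists (hQ0 : ∀ x, 0 ≤ Q x)
    (h : ∀ f : ∀ j, X j → A j, ∃ g : ∀ j, X j → A j, ∀ x, 0 < Q x →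
      V x (fun j => f j (x j)) = true → W x (fun j => g j (x j)) = true) :
    gameVal Q V ≤ gameVal Q W := by
  have hbdd := (Set.finite_range fun g : ∀ j, X j → A j =>
    ∑ x, Q x * (if W x (fun j => g j (x j)) then (1:ℝ) else 0)).bddAbove
  refine Real.iSup_le (fun f => ?_) (Real.iSup_nonneg fun g => ?_)
  · obtain ⟨g, hg⟩ := h f
    exact (Finset.sum_mul_ite_le_sum_mul_ite hQ0 hg).trans (le_ciSup hbdd g)
  · exact Finset.sum_nonneg fun x _ => mul_nonneg (hQ0 x) (by split_ifs <;> norm_num)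

theorem gameVal_mono (hQ0 : ∀ x, 0 ≤ Q x) (hVW : ∀ x a, V x a = true → W x a = true) :
    gameVal Q V ≤ gameVal Q W :=
  gameVal_le_of_forall_exists hQ0 fun f => ⟨f, fun x _ => hVW x _⟩

theorem repVal_mono (hQ0 : ∀ x, 0 ≤ Q x) (hVW : ∀ x a, V x a = true → W x a = true)
    (n : ℕ) : repVal Q V n ≤ repVal Q W n :=
  ciSup_mono (Set.finite_range _).bddAbove fun _ =>
    Finset.sum_mul_ite_le_sum_mul_ite (fun _ => Finset.prod_nonneg fun _ _ => hQ0 _)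
      fun _ _ hV i => hVW _ _ (hV i)

theorem gameVal_optimizeAnswerAt_le (hQ0 : ∀ x, 0 ≤ Q x)
    (huniq : ∀ x, 0 < Q x → x j = y j → x = y) :
    gameVal Q (optimizeAnswerAt V y j) ≤ gameVal Q V := by
  classical
  refine gameVal_le_of_forall_exists hQ0 fun f => ?_
  set a : ∀ j, A j := fun j' => f j' (y j')
  have : Nonempty (A j) := ⟨a j⟩
  set c := Classical.epsilon fun c => V y (Function.update a j c) = true
  refine ⟨Function.update f j (Function.update (f j) (y j) c), fun x hx hwin => ?_⟩
  by_cases hxy : x = y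
  · subst hxy
    have hanswers : (fun j' => Function.update f j (Function.update (f j) (x j) c) j' (x j'))
        = Function.update a j c := by
      funext j'
      by_cases hj' : j' = j
      · subst hj'; simp
      · simp [hj', a]
    rw [hanswers]
    exact Classical.epsilon_spec ((optimizeAnswerAt_self a).1 hwin)
  · have hxj : x j ≠ y j := fun h => hxy (huniq x hx h)
    have hanswers : (fun j' => Function.update f j (Function.update (f j) (y j) c) j' (x j'))
        = fun j' => f j' (x j') := by
      funext j'
      by_cases hj' : j' = j
      · subst hj'; simp [hxj]
      · simp [hj']
    rwa [hanswers, ← optimizeAnswerAt_of_ne (V := V) (j := j) hxy]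

end Game

theorem stmt_9_general {k : ℕ} {X A : Fin k → Type} [∀ j, Fintype (X j)] [∀ j, Fintype (A j)]
    (Q : (∀ j, X j) → ℝ) (hQ0 : ∀ x, 0 ≤ Q x)
    (V : (∀ j, X j) → (∀ j, A j) → Bool)
    (y : ∀ j, X j) (j : Fin k)
    (huniq : ∀ x, 0 < Q x → x j = y j → x = y) :
    ∃ V' : (∀ j, X j) → (∀ j, A j) → Bool,
      (∀ a b : ∀ j', A j', (∀ j', j' ≠ j → a j' = b j') → V' y a = V' y b) ∧
      (∀ n, repVal Q V n ≤ repVal Q V' n) ∧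
      gameVal Q V' = gameVal Q V :=
  ⟨optimizeAnswerAt V y j, fun _ _ => optimizeAnswerAt_self_congr,
    repVal_mono hQ0 fun _ _ => le_optimizeAnswerAt,
    (gameVal_optimizeAnswerAt_le hQ0 huniq).antisymm
      (gameVal_mono hQ0 fun _ _ => le_optimizeAnswerAt)⟩

/-- If `y` is the unique support point of `Q` whose j-th coordinate is `y j`,
then there is a predicate `V'` that (a) on question `y` does not depend on player j's
answer, (b) dominates the parallel repetition value of `V` for all `n`, and (c) has the
same single-shot value as `V`. -/
theorem stmt_9 {k : ℕ} {X A : Fin k → Type} [∀ j, Fintype (X j)] [∀ j, Fintype (A j)]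
    [∀ j, Nonempty (A j)] [∀ j, DecidableEq (X j)]
    (Q : (∀ j, X j) → ℝ) (hQ0 : ∀ x, 0 ≤ Q x) (hQ1 : ∑ x, Q x = 1)
    (V : (∀ j, X j) → (∀ j, A j) → Bool)
    (y : ∀ j, X j) (j : Fin k) (hy : 0 < Q y)
    (huniq : ∀ x, 0 < Q x → x j = y j → x = y) :
    ∃ V' : (∀ j, X j) → (∀ j, A j) → Bool,
      (∀ a b : ∀ j', A j', (∀ j', j' ≠ j → a j' = b j') → V' y a = V' y b) ∧
      (∀ n, repVal Q V n ≤ repVal Q V' n) ∧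
      gameVal Q V' = gameVal Q V :=
  stmt_9_general Q hQ0 V y j huniq

end
end

section
/- Let 𝒢 = (𝒳, 𝒜, Q, V) be a k-player game with value < 1, let 𝒮 ⊆ 𝒳 be the support of Q, and let 𝒢̃ = (𝒳, 𝒜, U, V) where U is uniform on 𝒮. Then (a) val(𝒢̃) < 1, and (b) writing v(m) = val(𝒢̃^{⊗m}) (with v(0) = 1), there exists a constant β > 0 (depending only on 𝒢) such that val(𝒢^{⊗n}) ≤ 2·v(⌊βn⌋) for all n ∈ ℕ. -/
set_option linter.unusedSectionVars false
set_option linter.unusedVariables false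
set_option maxHeartbeats 1000000


noncomputable section

section Aux

variable {k : ℕ} {X A : Fin k → Type} [∀ j, Fintype (X j)] [∀ j, Fintype (A j)]
    [∀ j, Nonempty (A j)] [∀ j, DecidableEq (X j)]
    (V : (∀ j, X j) → (∀ j, A j) → Bool)

/-- winning probability of a fixed strategy under per-coordinate distributions -/
def payoff {n : ℕ} (d : Fin n → (∀ j, X j) → ℝ)
    (F : ∀ j, (Fin n → X j) → (Fin n → A j)) : ℝ :=
  ∑ x : Fin n → ∀ j, X j,
    (∏ i, d i (x i)) *
      (if ∀ i, V (x i) (fun j => F j (fun i' => x i' j) i) then (1:ℝ) else 0)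

lemma repVal_def' (Q : (∀ j, X j) → ℝ) (n : ℕ) :
    repVal Q V n = ⨆ F, payoff V (fun _ : Fin n => Q) F := rfl

lemma payoff_le_repVal (Q : (∀ j, X j) → ℝ) (n : ℕ)
    (F : ∀ j, (Fin n → X j) → (Fin n → A j)) :
    payoff V (fun _ : Fin n => Q) F ≤ repVal Q V n :=
  le_ciSup (Set.finite_range _).bddAbove F

lemma payoff_nonneg {n : ℕ} (d : Fin n → (∀ j, X j) → ℝ) (hd0 : ∀ i x, 0 ≤ d i x)
    (F : ∀ j, (Fin n → X j) → (Fin n → A j)) : 0 ≤ payoff V d F := by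
  refine Finset.sum_nonneg fun x _ => mul_nonneg (Finset.prod_nonneg fun i _ => hd0 i _) ?_
  split <;> norm_num

lemma repVal_nonneg (Q : (∀ j, X j) → ℝ) (hQ0 : ∀ x, 0 ≤ Q x) (n : ℕ) :
    0 ≤ repVal Q V n :=
  le_trans (payoff_nonneg V _ (fun _ _ => hQ0 _) (Classical.arbitrary _))
    (payoff_le_repVal V Q n _)

lemma repVal_le_one (Q : (∀ j, X j) → ℝ) (hQ0 : ∀ x, 0 ≤ Q x) (hQ1 : ∑ x, Q x = 1)
    (n : ℕ) : repVal Q V n ≤ 1 := by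
  refine ciSup_le fun F => ?_
  have h1 : payoff V (fun _ : Fin n => Q) F ≤ ∑ x : Fin n → ∀ j, X j, ∏ i, Q (x i) := by
    refine Finset.sum_le_sum fun x _ => ?_
    have := Finset.prod_nonneg (s := Finset.univ) fun i _ => hQ0 (x i)
    split <;> simp <;> positivity
  refine h1.trans ?_
  rw [← Fintype.prod_sum (fun (_ : Fin n) (y : ∀ j, X j) => Q y)]
  simp [hQ1]

lemma repVal_zero (Q : (∀ j, X j) → ℝ) : repVal Q V 0 = 1 := by
  rw [repVal_def']
  have : ∀ F : ∀ j, (Fin 0 → X j) → (Fin 0 → A j), payoff V (fun _ : Fin 0 => Q) F = 1 := by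
    intro F
    unfold payoff
    rw [Fintype.sum_eq_single (fun (i : Fin 0) => (i.elim0 : ∀ j, X j))]
    · simp
    · intro x hx; exact absurd (funext fun i => i.elim0) hx
  simp only [this, ciSup_const]

lemma gameVal_nonneg (Q : (∀ j, X j) → ℝ) (hQ0 : ∀ x, 0 ≤ Q x) : 0 ≤ gameVal Q V := by
  refine le_trans ?_ (le_ciSup (Set.finite_range _).bddAbove (Classical.arbitrary _))
  refine Finset.sum_nonneg fun x _ => mul_nonneg (hQ0 x) ?_
  split <;> norm_num


lemma payoff_le_repVal_card (Uu : (∀ j, X j) → ℝ)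
    {n : ℕ} (d : Fin n → (∀ j, X j) → ℝ) (S : Finset (Fin n))
    (hd0 : ∀ i x, 0 ≤ d i x)
    (hdS : ∀ i ∈ S, d i = Uu)
    (hd1 : ∀ i ∉ S, ∑ x, d i x = 1)
    (F : ∀ j, (Fin n → X j) → (Fin n → A j)) :
    payoff V d F ≤ repVal Uu V S.card := by
  classical
  -- Step 1: relax the indicator to only require winning on S
  have h1 : payoff V d F ≤ ∑ x : Fin n → (∀ j, X j), (∏ i, d i (x i)) *
      (if ∀ i ∈ S, V (x i) (fun j => F j (fun i' => x i' j) i) then (1:ℝ) else 0) := by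
    refine Finset.sum_le_sum fun x _ => ?_
    refine mul_le_mul_of_nonneg_left ?_ (Finset.prod_nonneg fun i _ => hd0 i _)
    by_cases hA : ∀ i, V (x i) (fun j => F j (fun i' => x i' j) i)
    · rw [if_pos hA, if_pos fun i _ => hA i]
    · rw [if_neg hA]; split <;> norm_num
  refine h1.trans ?_
  -- Step 2: split x into coordinates in S and outside S
  set φ := Equiv.piEquivPiSubtypeProd (fun i : Fin n => i ∈ S) (fun _ => (∀ j, X j)) with hφ
  set g := fun x : Fin n → (∀ j, X j) => (∏ i, d i (x i)) *
      (if ∀ i ∈ S, V (x i) (fun j => F j (fun i' => x i' j) i) then (1:ℝ) else 0) with hg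
  have h2 : ∑ x : Fin n → (∀ j, X j), g x
      = ∑ z : {i : Fin n // ¬ i ∈ S} → (∀ j, X j), ∑ y : {i : Fin n // i ∈ S} → (∀ j, X j),
          g (φ.symm (y, z)) := by
    rw [← Equiv.sum_comp φ.symm g, Fintype.sum_prod_type, Finset.sum_comm]
  rw [h2]
  -- Step 3: bound the inner sum for each fixed z
  set s := S.card with hs
  set e := (S.orderIsoOfFin rfl).toEquiv with he
  have h3 : ∀ z : {i : Fin n // ¬ i ∈ S} → (∀ j, X j),
      ∑ y : {i : Fin n // i ∈ S} → (∀ j, X j), g (φ.symm (y, z))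
        ≤ (∏ t : {i : Fin n // ¬ i ∈ S}, d t (z t)) * repVal Uu V s := by
    intro z
    set G : ∀ j, (Fin s → X j) → (Fin s → A j) := fun j q t =>
      F j (fun i' => if h : i' ∈ S then q (e.symm ⟨i', h⟩) else z ⟨i', h⟩ j) (e t) with hG
    -- rewrite each summand
    have hx : ∀ (y : {i : Fin n // i ∈ S} → (∀ j, X j)) (i : Fin n),
        φ.symm (y, z) i = if h : i ∈ S then y ⟨i, h⟩ else z ⟨i, h⟩ := by
      intro y i; rfl
    have hsplit : ∀ y : {i : Fin n // i ∈ S} → (∀ j, X j),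
        g (φ.symm (y, z)) = ((∏ t : {i : Fin n // i ∈ S}, Uu (y t)) *
          (if ∀ t : {i : Fin n // i ∈ S},
              V (y t) (fun j => F j (fun i' => φ.symm (y, z) i' j) t.1) then (1:ℝ) else 0)) *
          (∏ t : {i : Fin n // ¬ i ∈ S}, d t.1 (z t)) := by
      intro y
      have hprod : (∏ i, d i (φ.symm (y, z) i))
          = (∏ t : {i : Fin n // i ∈ S}, Uu (y t)) *
            (∏ t : {i : Fin n // ¬ i ∈ S}, d t.1 (z t)) := by
        rw [← Finset.prod_mul_prod_compl S (fun i => d i (φ.symm (y, z) i)),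
          Finset.prod_subtype S (fun _ => Iff.rfl) (fun i => d i (φ.symm (y, z) i)),
          Finset.prod_subtype Sᶜ (fun i => Finset.mem_compl) (fun i => d i (φ.symm (y, z) i))]
        congr 1
        · refine Finset.prod_congr rfl fun t _ => ?_
          rw [hx y t.1, dif_pos t.2, hdS t.1 t.2]
        · refine Finset.prod_congr rfl fun t _ => ?_
          rw [hx y t.1, dif_neg t.2]
      have hind : (∀ i ∈ S, V (φ.symm (y, z) i)
            (fun j => F j (fun i' => φ.symm (y, z) i' j) i))
          ↔ (∀ t : {i : Fin n // i ∈ S},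
            V (y t) (fun j => F j (fun i' => φ.symm (y, z) i' j) t.1)) := by
        constructor
        · intro h t
          have := h t.1 t.2
          rwa [hx y t.1, dif_pos t.2] at this
        · intro h i hi
          have := h ⟨i, hi⟩
          rwa [hx y i, dif_pos hi]
      simp only [hg]
      rw [hprod]
      by_cases hc : ∀ i ∈ S, V (φ.symm (y, z) i)
          (fun j => F j (fun i' => φ.symm (y, z) i' j) i)
      · rw [if_pos hc, if_pos (hind.mp hc)]; ring
      · rw [if_neg hc, if_neg (fun h => hc (hind.mpr h))]; ring
    calc ∑ y : {i : Fin n // i ∈ S} → (∀ j, X j), g (φ.symm (y, z))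
        = (∑ y : {i : Fin n // i ∈ S} → (∀ j, X j), (∏ t : {i : Fin n // i ∈ S}, Uu (y t)) *
            (if ∀ t : {i : Fin n // i ∈ S},
                V (y t) (fun j => F j (fun i' => φ.symm (y, z) i' j) t.1) then (1:ℝ) else 0)) *
          (∏ t : {i : Fin n // ¬ i ∈ S}, d t.1 (z t)) := by
          rw [Finset.sum_mul]; exact Finset.sum_congr rfl fun y _ => hsplit y
      _ ≤ repVal Uu V s * (∏ t : {i : Fin n // ¬ i ∈ S}, d t.1 (z t)) := by
          refine mul_le_mul_of_nonneg_right ?_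
            (Finset.prod_nonneg fun t _ => hd0 t.1 _)
          -- reindex y through e and recognize payoff of G
          have hre : (∑ y : {i : Fin n // i ∈ S} → (∀ j, X j), (∏ t : {i : Fin n // i ∈ S}, Uu (y t)) *
              (if ∀ t : {i : Fin n // i ∈ S},
                  V (y t) (fun j => F j (fun i' => φ.symm (y, z) i' j) t.1) then (1:ℝ) else 0))
              = payoff V (fun _ : Fin s => Uu) G := by
            rw [payoff]
            set ψ := Equiv.arrowCongr e (Equiv.refl (∀ j, X j)) with hψ
            rw [← Equiv.sum_comp ψ]
            refine Finset.sum_congr rfl fun q _ => ?_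
            have hψq : ∀ t, ψ q t = q (e.symm t) := fun t => rfl
            congr 1
            · rw [← Equiv.prod_comp e (fun t => Uu (ψ q t))]
              exact Finset.prod_congr rfl fun u _ => by rw [hψq, Equiv.symm_apply_apply]
            · congr 1
              rw [eq_iff_iff]
              rw [← Equiv.forall_congr_right (q := fun t => V (ψ q t)
                (fun j => F j (fun i' => φ.symm (ψ q, z) i' j) t.1) = true) (e := e)]
              refine forall_congr' fun u => ?_
              rw [hψq, Equiv.symm_apply_apply]
              constructor <;> intro h <;> convert h using 2 <;>
                · funext j
                  simp only [hG]
                  congr 1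
                  funext i'
                  rw [hx (ψ q) i']
                  by_cases hi' : i' ∈ S
                  · simp [hi', hψq]
                  · simp [hi']
          rw [hre]
          exact payoff_le_repVal V Uu s G
      _ = (∏ t : {i : Fin n // ¬ i ∈ S}, d t.1 (z t)) * repVal Uu V s := mul_comm _ _
  calc ∑ z : {i : Fin n // ¬ i ∈ S} → (∀ j, X j), ∑ y : {i : Fin n // i ∈ S} → (∀ j, X j), g (φ.symm (y, z))
      ≤ ∑ z : {i : Fin n // ¬ i ∈ S} → (∀ j, X j),
          (∏ t : {i : Fin n // ¬ i ∈ S}, d t.1 (z t)) * repVal Uu V s :=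
        Finset.sum_le_sum fun z _ => h3 z
    _ = (∑ z : {i : Fin n // ¬ i ∈ S} → (∀ j, X j), ∏ t : {i : Fin n // ¬ i ∈ S}, d t.1 (z t)) *
        repVal Uu V s := by rw [Finset.sum_mul]
    _ = repVal Uu V s := by
        rw [← Fintype.prod_sum (fun (t : {i : Fin n // ¬ i ∈ S}) (y : (∀ j, X j)) => d t.1 y)]
        rw [Finset.prod_congr rfl fun t _ => hd1 t.1 t.2]
        simp

lemma le_gameVal (Q : (∀ j, X j) → ℝ) (f : ∀ j, X j → A j) :
    (∑ x, Q x * (if V x (fun j => f j (x j)) then (1:ℝ) else 0)) ≤ gameVal Q V := by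
  unfold gameVal
  exact le_ciSup (Set.finite_range fun g : ∀ j, X j → A j =>
    ∑ x, Q x * (if V x (fun j => g j (x j)) then (1:ℝ) else 0)).bddAbove f

lemma gameVal_le (Q : (∀ j, X j) → ℝ) (c : ℝ)
    (h : ∀ f : ∀ j, X j → A j,
      (∑ x, Q x * (if V x (fun j => f j (x j)) then (1:ℝ) else 0)) ≤ c) :
    gameVal Q V ≤ c := by
  unfold gameVal
  exact ciSup_le h

lemma repVal_decomp (Q Uu Q' : (∀ j, X j) → ℝ) (γ : ℝ) (hγ0 : 0 ≤ γ) (hγ1 : γ ≤ 1)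
    (hQ'0 : ∀ x, 0 ≤ Q' x) (hQ'1 : ∑ x, Q' x = 1)
    (hU0 : ∀ x, 0 ≤ Uu x)
    (hdec : ∀ x, Q x = γ * Uu x + (1 - γ) * Q' x) (n : ℕ) :
    repVal Q V n ≤ ∑ S : Finset (Fin n),
      (γ ^ S.card * (1 - γ) ^ Sᶜ.card) * repVal Uu V S.card := by
  refine ciSup_le fun F => ?_
  have hx : ∀ x : Fin n → (∀ j, X j), (∏ i, Q (x i)) = ∑ S : Finset (Fin n),
      (γ ^ S.card * (1 - γ) ^ Sᶜ.card) * ∏ i, (if i ∈ S then Uu else Q') (x i) := by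
    intro x
    rw [Finset.prod_congr rfl fun i (_ : i ∈ Finset.univ) => hdec (x i), Fintype.prod_add]
    refine Finset.sum_congr rfl fun S _ => ?_
    rw [Finset.prod_mul_distrib, Finset.prod_mul_distrib, Finset.prod_const, Finset.prod_const,
      ← Finset.prod_mul_prod_compl S (fun i => (if i ∈ S then Uu else Q') (x i))]
    have e1 : ∏ i ∈ S, (if i ∈ S then Uu else Q') (x i) = ∏ i ∈ S, Uu (x i) :=
      Finset.prod_congr rfl fun i hi => by rw [if_pos hi]
    have e2 : ∏ i ∈ Sᶜ, (if i ∈ S then Uu else Q') (x i) = ∏ i ∈ Sᶜ, Q' (x i) :=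
      Finset.prod_congr rfl fun i hi => by rw [if_neg (Finset.mem_compl.mp hi)]
    rw [e1, e2]; ring
  have key : (payoff V (fun _ : Fin n => Q) F : ℝ)
      = ∑ S : Finset (Fin n), (γ ^ S.card * (1 - γ) ^ Sᶜ.card) *
          payoff V (fun i => if i ∈ S then Uu else Q') F := by
    unfold payoff
    calc ∑ x : Fin n → ∀ j, X j, (∏ i, Q (x i)) *
          (if ∀ i, V (x i) (fun j => F j (fun i' => x i' j) i) then (1:ℝ) else 0)
        = ∑ x : Fin n → ∀ j, X j, ∑ S : Finset (Fin n),
            (γ ^ S.card * (1 - γ) ^ Sᶜ.card) * ((∏ i, (if i ∈ S then Uu else Q') (x i)) *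
              (if ∀ i, V (x i) (fun j => F j (fun i' => x i' j) i) then (1:ℝ) else 0)) := by
          refine Finset.sum_congr rfl fun x _ => ?_
          rw [hx x, Finset.sum_mul]
          exact Finset.sum_congr rfl fun S _ => by ring
      _ = _ := by
          rw [Finset.sum_comm]
          exact Finset.sum_congr rfl fun S _ => by rw [← Finset.mul_sum]
  refine le_trans (le_of_eq key) (Finset.sum_le_sum fun S _ => ?_)
  refine mul_le_mul_of_nonneg_left ?_
    (mul_nonneg (pow_nonneg hγ0 _) (pow_nonneg (by linarith) _))
  refine payoff_le_repVal_card V Uu _ S ?_ ?_ ?_ F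
  · intro i x; split
    · exact hU0 x
    · exact hQ'0 x
  · intro i hi; rw [if_pos hi]
  · intro i hi; rw [if_neg hi]; exact hQ'1

lemma repVal_antitone (Uu : (∀ j, X j) → ℝ) (hU0 : ∀ x, 0 ≤ Uu x)
    (hU1 : ∑ x, Uu x = 1) {m n : ℕ} (h : m ≤ n) :
    repVal Uu V n ≤ repVal Uu V m := by
  obtain ⟨S, -, hS⟩ := Finset.exists_subset_card_eq
    (s := (Finset.univ : Finset (Fin n))) (n := m) (by simpa using h)
  refine ciSup_le fun F => ?_
  have := payoff_le_repVal_card V Uu (fun _ : Fin n => Uu) S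
    (fun _ x => hU0 x) (fun _ _ => rfl) (fun _ _ => hU1) F
  rwa [hS] at this

lemma pow_le_repVal (Uu : (∀ j, X j) → ℝ) (m : ℕ) :
    gameVal Uu V ^ m ≤ repVal Uu V m := by
  obtain ⟨f, hf⟩ := Finite.exists_max (fun f : ∀ j, X j → A j =>
    ∑ x, Uu x * (if V x (fun j => f j (x j)) then (1:ℝ) else 0))
  have hval : gameVal Uu V = ∑ x, Uu x * (if V x (fun j => f j (x j)) then (1:ℝ) else 0) :=
    le_antisymm (gameVal_le V Uu _ hf) (le_gameVal V Uu f)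
  rw [hval]
  refine le_trans (le_of_eq ?_) (payoff_le_repVal V Uu m (fun j q i => f j (q i)))
  unfold payoff
  rw [Fintype.sum_pow (fun y : ∀ j, X j => Uu y * (if V y (fun j => f j (y j)) then (1:ℝ) else 0)) m]
  refine Finset.sum_congr rfl fun x _ => ?_
  rw [Finset.prod_mul_distrib, Finset.prod_boole]
  simp

lemma gameVal_le_of (Q Uu : (∀ j, X j) → ℝ) (hQ0 : ∀ x, 0 ≤ Q x) (hQ1 : ∑ x, Q x = 1)
    (hU0 : ∀ x, 0 ≤ Uu x) (hU1 : ∑ x, Uu x = 1)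
    (ε : ℝ) (hUε : ∀ x, 0 < Q x → ε ≤ Uu x)
    (hval : gameVal Q V < 1) : gameVal Uu V ≤ 1 - ε := by
  refine gameVal_le V Uu _ fun f => ?_
  have hlt : ∑ x, Q x * (if V x (fun j => f j (x j)) then (1:ℝ) else 0) < 1 :=
    lt_of_le_of_lt (le_gameVal V Q f) hval
  obtain ⟨x₀, hx₀Q, hx₀V⟩ : ∃ x₀, 0 < Q x₀ ∧ ¬ (V x₀ (fun j => f j (x₀ j)) = true) := by
    by_contra h
    push_neg at h
    have : ∑ x, Q x * (if V x (fun j => f j (x j)) then (1:ℝ) else 0) = ∑ x, Q x := by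
      refine Finset.sum_congr rfl fun x _ => ?_
      rcases lt_or_eq_of_le (hQ0 x) with hx | hx
      · rw [if_pos (h x hx), mul_one]
      · rw [← hx, zero_mul]
    rw [this, hQ1] at hlt
    exact lt_irrefl _ hlt
  have step : ∑ x, Uu x * (if V x (fun j => f j (x j)) then (1:ℝ) else 0)
      ≤ ∑ x, (if x = x₀ then 0 else Uu x) := by
    refine Finset.sum_le_sum fun x _ => ?_
    by_cases hx : x = x₀
    · subst hx; rw [if_pos rfl, if_neg hx₀V, mul_zero]
    · rw [if_neg hx]
      refine mul_le_of_le_one_right (hU0 x) ?_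
      split <;> norm_num
  refine step.trans ?_
  have e1 : ∑ x, (if x = x₀ then (0:ℝ) else Uu x) = (∑ x, Uu x) - Uu x₀ := by
    rw [← Finset.add_sum_erase _ _ (Finset.mem_univ x₀),
      ← Finset.add_sum_erase _ Uu (Finset.mem_univ x₀), if_pos rfl]
    rw [Finset.sum_congr rfl fun x hx => if_neg (Finset.ne_of_mem_erase hx)]
    ring
  rw [e1, hU1]
  linarith [hUε x₀ hx₀Q]

lemma repVal_le_zero_of (Q Uu : (∀ j, X j) → ℝ) (hQ0 : ∀ x, 0 ≤ Q x)
    (hUQ : ∀ x, 0 < Q x → 0 < Uu x) (hU0 : ∀ x, 0 ≤ Uu x)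
    (hU : gameVal Uu V ≤ 0) {n : ℕ} (hn : 0 < n) : repVal Q V n ≤ 0 := by
  refine ciSup_le fun F => le_of_eq (Finset.sum_eq_zero fun x _ => ?_)
  by_cases hx : ∀ i, 0 < Q (x i)
  · set i0 : Fin n := ⟨0, hn⟩ with hi0
    set f : ∀ j, X j → A j := fun j y => F j (Function.update (fun i' => x i' j) i0 y) i0 with hfdef
    have hle : ∑ y, Uu y * (if V y (fun j => f j (y j)) then (1:ℝ) else 0) ≤ 0 :=
      le_trans (le_gameVal V Uu f) hU
    have hnn : ∀ y ∈ Finset.univ, 0 ≤ Uu y * (if V y (fun j => f j (y j)) then (1:ℝ) else 0) := by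
      intro y _
      refine mul_nonneg (hU0 y) ?_
      split <;> norm_num
    have hz := (Finset.sum_eq_zero_iff_of_nonneg hnn).mp
      (le_antisymm hle (Finset.sum_nonneg hnn)) (x i0) (Finset.mem_univ _)
    have hUxi : 0 < Uu (x i0) := hUQ _ (hx i0)
    have hVfalse : ¬ (V (x i0) (fun j => f j (x i0 j)) = true) := by
      intro hV
      rw [if_pos hV, mul_one] at hz
      exact hUxi.ne' hz
    have hkey : (fun j => f j (x i0 j)) = fun j => F j (fun i' => x i' j) i0 := by
      funext j
      simp only [hfdef]
      congr 1
      exact Function.update_eq_self i0 (fun i' => x i' j)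
    rw [if_neg, mul_zero]
    intro hall
    exact hVfalse (by rw [hkey]; exact hall i0)
  · push_neg at hx
    obtain ⟨i, hi⟩ := hx
    have : Q (x i) = 0 := le_antisymm hi (hQ0 (x i))
    rw [Finset.prod_eq_zero (Finset.mem_univ i) this, zero_mul]


end Aux

/-- Let `𝒢` have value < 1, and let `𝒢̃` be the same game with question
distribution `U` uniform on the support of `Q`. Then (a) `val(𝒢̃) < 1`, and (b) there is
`β > 0` with `val(𝒢^{⊗n}) ≤ 2 · val(𝒢̃^{⊗⌊βn⌋})` for all `n`. -/
theorem stmt_10 {k : ℕ} {X A : Fin k → Type} [∀ j, Fintype (X j)] [∀ j, Fintype (A j)]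
    [∀ j, Nonempty (A j)] [∀ j, DecidableEq (X j)]
    (Q : (∀ j, X j) → ℝ) (hQ0 : ∀ x, 0 ≤ Q x) (hQ1 : ∑ x, Q x = 1)
    (V : (∀ j, X j) → (∀ j, A j) → Bool)
    (hval : gameVal Q V < 1) :
    let U : (∀ j, X j) → ℝ := fun x =>
      if 0 < Q x then 1 / ((Finset.univ.filter fun x' => 0 < Q x').card : ℝ) else 0
    gameVal U V < 1 ∧
      ∃ β : ℝ, 0 < β ∧ ∀ n : ℕ, repVal Q V n ≤ 2 * repVal U V ⌊β * n⌋₊ := by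
  intro U
  have hUdef : U = fun x =>
      if 0 < Q x then 1 / ((Finset.univ.filter fun x' => 0 < Q x').card : ℝ) else 0 := rfl
  set Sf := (Finset.univ.filter fun x' => 0 < Q x') with hSfdef
  have hSfne : Sf.Nonempty := by
    by_contra h
    rw [Finset.not_nonempty_iff_eq_empty] at h
    have hz : ∑ x, Q x = 0 := by
      refine Finset.sum_eq_zero fun x _ => ?_
      by_contra hqx
      have hx : x ∈ Sf := Finset.mem_filter.mpr ⟨Finset.mem_univ x, (hQ0 x).lt_of_ne (Ne.symm hqx)⟩
      rw [h] at hx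
      exact absurd hx (Finset.notMem_empty x)
    rw [hz] at hQ1
    norm_num at hQ1
  have hsR : 0 < (Sf.card : ℝ) := by
    have := Finset.card_pos.mpr hSfne
    exact_mod_cast this
  have hUx : ∀ x, 0 < Q x → U x = 1 / (Sf.card : ℝ) := by
    intro x hx
    rw [hUdef]
    simp only [← hSfdef]
    rw [if_pos hx]
  have hUx0 : ∀ x, ¬ 0 < Q x → U x = 0 := by
    intro x hx
    rw [hUdef]
    simp only [← hSfdef]
    rw [if_neg hx]
  have hU0 : ∀ x, 0 ≤ U x := by
    intro x
    by_cases hx : 0 < Q x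
    · rw [hUx x hx]; positivity
    · rw [hUx0 x hx]
  have hU1 : ∑ x, U x = 1 := by
    have : ∀ x, U x = if 0 < Q x then 1 / (Sf.card : ℝ) else 0 := by
      intro x
      by_cases hx : 0 < Q x
      · rw [hUx x hx, if_pos hx]
      · rw [hUx0 x hx, if_neg hx]
    rw [Finset.sum_congr rfl fun x _ => this x, ← Finset.sum_filter, ← hSfdef,
      Finset.sum_const, nsmul_eq_mul]
    field_simp
  -- part (a)
  have hUeps : ∀ x, 0 < Q x → 1 / (Sf.card : ℝ) ≤ U x := fun x hx => le_of_eq (hUx x hx).symm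
  have ha : gameVal U V < 1 := by
    refine lt_of_le_of_lt (gameVal_le_of V Q U hQ0 hQ1 hU0 hU1 _ hUeps hval) ?_
    have : 0 < 1 / (Sf.card : ℝ) := by positivity
    linarith
  refine ⟨ha, ?_⟩
  set v := gameVal U V with hvdef
  have hv0 : 0 ≤ v := gameVal_nonneg V U hU0
  by_cases hvz : v ≤ 0
  · -- degenerate case : value zero
    refine ⟨1, one_pos, fun n => ?_⟩
    rcases Nat.eq_zero_or_pos n with rfl | hn
    · have h0 : ⌊(1:ℝ) * (0:ℕ)⌋₊ = 0 := by norm_num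
      rw [h0, repVal_zero V U]
      have := repVal_le_one V Q hQ0 hQ1 0
      linarith
    · have h1 : repVal Q V n ≤ 0 :=
        repVal_le_zero_of V Q U hQ0
          (fun x hx => by rw [hUx x hx]; positivity) hU0 hvz hn
      have h2 : 0 ≤ repVal U V ⌊(1:ℝ) * n⌋₊ := repVal_nonneg V U hU0 _
      linarith
  · push_neg at hvz
    have hv1 : v < 1 := ha
    -- the mixture coefficient γ
    set qm := Sf.inf' hSfne Q with hqmdef
    have hqm0 : 0 < qm := by
      rw [hqmdef, Finset.lt_inf'_iff]
      exact fun x hx => (Finset.mem_filter.mp hx).2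
    set γ := (Sf.card : ℝ) * qm / 2 with hγdef
    have hγ0 : 0 < γ := by positivity
    have hsqm : (Sf.card : ℝ) * qm ≤ 1 := by
      have e1 : (Sf.card : ℝ) * qm = ∑ _x ∈ Sf, qm := by
        rw [Finset.sum_const, nsmul_eq_mul]
      have e2 : ∑ _x ∈ Sf, qm ≤ ∑ x ∈ Sf, Q x :=
        Finset.sum_le_sum fun x hx => Finset.inf'_le Q hx
      have e3 : ∑ x ∈ Sf, Q x = ∑ x, Q x := by
        refine Finset.sum_subset (Finset.subset_univ Sf) fun x _ hx => ?_
        have : ¬ 0 < Q x := fun h => hx (Finset.mem_filter.mpr ⟨Finset.mem_univ x, h⟩)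
        linarith [hQ0 x]
      rw [e1]
      rw [e3] at e2
      linarith [e2, hQ1.le]
    have hγhalf : γ ≤ 1 / 2 := by rw [hγdef]; linarith
    have hγ1 : γ < 1 := by linarith
    set Q' : (∀ j, X j) → ℝ := fun x => (Q x - γ * U x) / (1 - γ) with hQ'def
    have hQU : ∀ x, γ * U x ≤ Q x := by
      intro x
      by_cases hx : 0 < Q x
      · rw [hUx x hx]
        have e : γ * (1 / (Sf.card : ℝ)) = qm / 2 := by
          rw [hγdef]; field_simp
        rw [e]
        have : qm ≤ Q x := Finset.inf'_le Q (Finset.mem_filter.mpr ⟨Finset.mem_univ x, hx⟩)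
        linarith
      · rw [hUx0 x hx, mul_zero]
        exact hQ0 x
    have hQ'0 : ∀ x, 0 ≤ Q' x := fun x =>
      div_nonneg (sub_nonneg.mpr (hQU x)) (by linarith)
    have hQ'1 : ∑ x, Q' x = 1 := by
      rw [hQ'def]
      rw [← Finset.sum_div, Finset.sum_sub_distrib, ← Finset.mul_sum, hQ1, hU1]
      rw [mul_one]
      exact div_self (by linarith : (1:ℝ) - γ ≠ 0)
    have hdec : ∀ x, Q x = γ * U x + (1 - γ) * Q' x := by
      intro x
      rw [hQ'def]
      have h1γ : (1:ℝ) - γ ≠ 0 := by linarith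
      field_simp
      ring
    -- choice of β
    have hγ2 : 0 < 1 - γ / 2 := by linarith
    have hγ2' : 1 - γ / 2 < 1 := by linarith
    have h2v : 1 < 2 / v := by rw [lt_div_iff₀ hvz]; linarith
    have hlog2v : 0 < Real.log (2 / v) := Real.log_pos h2v
    have hloginv : 0 < Real.log (1 - γ / 2)⁻¹ :=
      Real.log_pos (one_lt_inv_iff₀.mpr ⟨hγ2, hγ2'⟩)
    set β := Real.log (1 - γ / 2)⁻¹ / Real.log (2 / v) with hβdef
    have hβ0 : 0 < β := div_pos hloginv hlog2v
    refine ⟨β, hβ0, fun n => ?_⟩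
    set m := ⌊β * n⌋₊ with hmdef
    set R := fun t : ℕ => repVal U V t with hRdef
    have hR1 : ∀ t, R t ≤ 1 := fun t => repVal_le_one V U hU0 hU1 t
    have hR0 : ∀ t, 0 ≤ R t := fun t => repVal_nonneg V U hU0 t
    have hanti : ∀ {a b : ℕ}, a ≤ b → R b ≤ R a := fun h => repVal_antitone V U hU0 hU1 h
    have hmain : repVal Q V n ≤ ∑ S : Finset (Fin n),
        (γ ^ S.card * (1 - γ) ^ Sᶜ.card) * R S.card :=
      repVal_decomp V Q U Q' γ hγ0.le hγ1.le hQ'0 hQ'1 hU0 hdec n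
    have hw0 : ∀ S : Finset (Fin n), 0 ≤ γ ^ S.card * (1 - γ) ^ Sᶜ.card := fun S =>
      mul_nonneg (pow_nonneg hγ0.le _) (pow_nonneg (by linarith) _)
    have hwsum : ∑ S : Finset (Fin n), γ ^ S.card * (1 - γ) ^ Sᶜ.card = 1 := by
      have e := Fintype.prod_add (fun _ : Fin n => γ) (fun _ : Fin n => 1 - γ)
      simp only [Finset.prod_const] at e
      rw [← e, show γ + (1 - γ) = 1 by ring, one_pow]
    have hwsum2 : ∑ S : Finset (Fin n), (γ / 2) ^ S.card * (1 - γ) ^ Sᶜ.card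
        = (1 - γ / 2) ^ n := by
      have e := Fintype.prod_add (fun _ : Fin n => γ / 2) (fun _ : Fin n => 1 - γ)
      simp only [Finset.prod_const] at e
      rw [← e, show γ / 2 + (1 - γ) = 1 - γ / 2 by ring, Finset.card_univ, Fintype.card_fin]
    -- split the sum according to whether S.card ≥ m
    have hsplit := Finset.sum_filter_add_sum_filter_not (Finset.univ : Finset (Finset (Fin n)))
      (fun S => m ≤ S.card) (fun S => (γ ^ S.card * (1 - γ) ^ Sᶜ.card) * R S.card)
    have hpart1 : ∑ S ∈ Finset.univ.filter (fun S : Finset (Fin n) => m ≤ S.card),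
        (γ ^ S.card * (1 - γ) ^ Sᶜ.card) * R S.card ≤ R m := by
      have step1 : ∑ S ∈ Finset.univ.filter (fun S : Finset (Fin n) => m ≤ S.card),
          (γ ^ S.card * (1 - γ) ^ Sᶜ.card) * R S.card
          ≤ ∑ S ∈ Finset.univ.filter (fun S : Finset (Fin n) => m ≤ S.card),
            (γ ^ S.card * (1 - γ) ^ Sᶜ.card) * R m := by
        refine Finset.sum_le_sum fun S hS => ?_
        exact mul_le_mul_of_nonneg_left (hanti (Finset.mem_filter.mp hS).2) (hw0 S)
      refine step1.trans ?_
      rw [← Finset.sum_mul]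
      have : ∑ S ∈ Finset.univ.filter (fun S : Finset (Fin n) => m ≤ S.card),
          γ ^ S.card * (1 - γ) ^ Sᶜ.card ≤ 1 := by
        calc ∑ S ∈ Finset.univ.filter (fun S : Finset (Fin n) => m ≤ S.card),
              γ ^ S.card * (1 - γ) ^ Sᶜ.card
            ≤ ∑ S : Finset (Fin n), γ ^ S.card * (1 - γ) ^ Sᶜ.card :=
              Finset.sum_le_sum_of_subset_of_nonneg
                (Finset.filter_subset (fun S : Finset (Fin n) => m ≤ S.card) Finset.univ)
                fun S _ _ => hw0 S
          _ = 1 := hwsum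
      calc (∑ S ∈ Finset.univ.filter (fun S : Finset (Fin n) => m ≤ S.card),
            γ ^ S.card * (1 - γ) ^ Sᶜ.card) * R m ≤ 1 * R m :=
            mul_le_mul_of_nonneg_right this (hR0 m)
        _ = R m := one_mul _
    have hpart2 : ∑ S ∈ Finset.univ.filter (fun S : Finset (Fin n) => ¬ m ≤ S.card),
        (γ ^ S.card * (1 - γ) ^ Sᶜ.card) * R S.card ≤ 2 ^ m * (1 - γ / 2) ^ n := by
      have step1 : ∀ S ∈ Finset.univ.filter (fun S : Finset (Fin n) => ¬ m ≤ S.card),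
          (γ ^ S.card * (1 - γ) ^ Sᶜ.card) * R S.card
          ≤ 2 ^ m * ((γ / 2) ^ S.card * (1 - γ) ^ Sᶜ.card) := by
        intro S hS
        have hcard : S.card ≤ m := (Nat.lt_of_not_le (Finset.mem_filter.mp hS).2).le
        have hRle : (γ ^ S.card * (1 - γ) ^ Sᶜ.card) * R S.card
            ≤ γ ^ S.card * (1 - γ) ^ Sᶜ.card :=
          mul_le_of_le_one_right (hw0 S) (hR1 _)
        refine hRle.trans ?_
        have e : γ ^ S.card * (1 - γ) ^ Sᶜ.card
            = 2 ^ S.card * ((γ / 2) ^ S.card * (1 - γ) ^ Sᶜ.card) := by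
          rw [← mul_assoc, ← mul_pow, show (2:ℝ) * (γ / 2) = γ by ring]
        rw [e]
        refine mul_le_mul_of_nonneg_right ?_
          (mul_nonneg (pow_nonneg (by linarith) _) (pow_nonneg (by linarith) _))
        exact pow_le_pow_right₀ (by norm_num) hcard
      calc ∑ S ∈ Finset.univ.filter (fun S : Finset (Fin n) => ¬ m ≤ S.card),
            (γ ^ S.card * (1 - γ) ^ Sᶜ.card) * R S.card
          ≤ ∑ S ∈ Finset.univ.filter (fun S : Finset (Fin n) => ¬ m ≤ S.card),
            2 ^ m * ((γ / 2) ^ S.card * (1 - γ) ^ Sᶜ.card) := Finset.sum_le_sum step1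
        _ ≤ ∑ S : Finset (Fin n), 2 ^ m * ((γ / 2) ^ S.card * (1 - γ) ^ Sᶜ.card) :=
            Finset.sum_le_sum_of_subset_of_nonneg (Finset.filter_subset _ _)
              fun S _ _ => mul_nonneg (by positivity)
                (mul_nonneg (pow_nonneg (by linarith) _) (pow_nonneg (by linarith) _))
        _ = 2 ^ m * (1 - γ / 2) ^ n := by rw [← Finset.mul_sum, hwsum2]
    -- tail bound against v ^ m
    have hmlen : (m : ℝ) ≤ β * n := by
      rw [hmdef]
      exact Nat.floor_le (by positivity)
    have htail : (2:ℝ) ^ m * (1 - γ / 2) ^ n ≤ v ^ m := by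
      have hkey : ((2 / v) ^ m : ℝ) ≤ (1 - γ / 2)⁻¹ ^ n := by
        have c1 : ((2 / v) ^ m : ℝ) = (2 / v) ^ (m : ℝ) := (Real.rpow_natCast _ m).symm
        have c2 : ((1 - γ / 2)⁻¹ ^ n : ℝ) = (1 - γ / 2)⁻¹ ^ (n : ℝ) :=
          (Real.rpow_natCast _ n).symm
        rw [c1, c2]
        have h1 : (2 / v : ℝ) ^ (m : ℝ) ≤ (2 / v) ^ (β * n) :=
          Real.rpow_le_rpow_of_exponent_le h2v.le hmlen
        refine h1.trans_eq ?_
        rw [Real.rpow_def_of_pos (by positivity), Real.rpow_def_of_pos (by positivity)]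
        congr 1
        rw [hβdef]
        field_simp
      have h2 : (2:ℝ) ^ m / v ^ m ≤ ((1 - γ / 2) ^ n)⁻¹ := by
        rw [← div_pow, ← inv_pow]
        exact hkey
      have h3 : (2:ℝ) ^ m ≤ ((1 - γ / 2) ^ n)⁻¹ * v ^ m :=
        (div_le_iff₀ (by positivity)).mp h2
      calc (2:ℝ) ^ m * (1 - γ / 2) ^ n
          ≤ (((1 - γ / 2) ^ n)⁻¹ * v ^ m) * (1 - γ / 2) ^ n :=
            mul_le_mul_of_nonneg_right h3 (by positivity)
        _ = v ^ m := by
            rw [mul_comm, ← mul_assoc,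
              mul_inv_cancel₀ (by positivity : ((1 - γ / 2) ^ n : ℝ) ≠ 0), one_mul]
    have hvm : v ^ m ≤ R m := pow_le_repVal V U m
    calc repVal Q V n ≤ ∑ S : Finset (Fin n), (γ ^ S.card * (1 - γ) ^ Sᶜ.card) * R S.card :=
          hmain
      _ = (∑ S ∈ Finset.univ.filter (fun S : Finset (Fin n) => m ≤ S.card),
            (γ ^ S.card * (1 - γ) ^ Sᶜ.card) * R S.card)
          + ∑ S ∈ Finset.univ.filter (fun S : Finset (Fin n) => ¬ m ≤ S.card),
            (γ ^ S.card * (1 - γ) ^ Sᶜ.card) * R S.card := hsplit.symm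
      _ ≤ R m + 2 ^ m * (1 - γ / 2) ^ n := add_le_add hpart1 hpart2
      _ ≤ R m + v ^ m := by linarith [htail]
      _ ≤ R m + R m := by linarith [hvm]
      _ = 2 * R m := by ring

end
end

section
/- Let 𝒢 be the 3-player game with questions uniform over 𝒮 = {(0,0,0),(1,0,0),(0,1,0),(0,0,1),(1,1,1)} ⊆ {0,1}³. Then 𝒢 is playerwise connected but not connected: for each player j the graph H^j on {0,1} (with an edge between x and x' if there exist questions y to the other two players with both (x;y) and (x';y) in 𝒮) is connected, while the graph H on vertex set 𝒮 with edges between question triples differing in exactly one player's question is disconnected. -/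
/-- The question support 𝒮 = {(0,0,0),(1,0,0),(0,1,0),(0,0,1),(1,1,1)} ⊆ {0,1}³. -/
def S5 : Set (Bool × Bool × Bool) :=
  {(false, false, false), (true, false, false), (false, true, false),
   (false, false, true), (true, true, true)}

/-- Two question triples differ in exactly one player's question. -/
def diffOne (p q : Bool × Bool × Bool) : Prop :=
  (p.1 ≠ q.1 ∧ p.2.1 = q.2.1 ∧ p.2.2 = q.2.2) ∨
  (p.1 = q.1 ∧ p.2.1 ≠ q.2.1 ∧ p.2.2 = q.2.2) ∨
  (p.1 = q.1 ∧ p.2.1 = q.2.1 ∧ p.2.2 ≠ q.2.2)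

/-- The 2-connection graph `H` on the support 𝒮: edges between question triples that
differ in exactly one player's question. -/
def Hgraph : SimpleGraph {p : Bool × Bool × Bool // p ∈ S5} :=
  SimpleGraph.fromRel fun p q => diffOne p.1 q.1

/-- Player 1's projected graph `H¹`: an edge between `x` and `x'` iff there are questions
`y, z` to the other players with both `(x,y,z)` and `(x',y,z)` in 𝒮. -/
def H1 : SimpleGraph Bool :=
  SimpleGraph.fromRel fun x x' => ∃ y z, (x, y, z) ∈ S5 ∧ (x', y, z) ∈ S5

/-- Player 2's projected graph `H²`. -/
def H2 : SimpleGraph Bool :=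
  SimpleGraph.fromRel fun y y' => ∃ x z, (x, y, z) ∈ S5 ∧ (x, y', z) ∈ S5

/-- Player 3's projected graph `H³`. -/
def H3 : SimpleGraph Bool :=
  SimpleGraph.fromRel fun z z' => ∃ x y, (x, y, z) ∈ S5 ∧ (x, y, z') ∈ S5

/-! The projected graphs live on the two-element alphabet, so a single witness edge makes each
of them complete. The triple `(1,1,1)` is an isolated vertex of `H`, since it differs from every
other point of 𝒮 in at least two coordinates. -/

lemma SimpleGraph.Connected.of_adj_false_true {G : SimpleGraph Bool} (h : G.Adj false true) :
    G.Connected :=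
  SimpleGraph.connected_top.mono fun a b hab => by
    cases a <;> cases b <;> simp_all [h.symm]

lemma Hgraph_isIsolated_true_true_true :
    Hgraph.IsIsolated ⟨(true, true, true), by simp [S5]⟩ := by
  rintro ⟨q, hq⟩ ⟨-, hdiff | hdiff⟩ <;>
  · simp only [S5, Set.mem_insert_iff, Set.mem_singleton_iff] at hq
    rcases hq with rfl | rfl | rfl | rfl | rfl <;> simp [diffOne] at hdiff

/-- the game on 𝒮 is playerwise connected (each projected graph `Hʲ` is
connected) but not connected (the graph `H` on 𝒮 is disconnected). -/
theorem stmt_19 : H1.Connected ∧ H2.Connected ∧ H3.Connected ∧ ¬ Hgraph.Connected := by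
  refine ⟨.of_adj_false_true ?_, .of_adj_false_true ?_,
    .of_adj_false_true ?_, fun hconn => ?_⟩
  iterate 3 exact (SimpleGraph.fromRel_adj ..).2 ⟨by simp, .inl ⟨false, false, by simp [S5]⟩⟩
  have : Nontrivial {p // p ∈ S5} :=
    ⟨⟨⟨(true, true, true), by simp [S5]⟩, ⟨(false, false, false), by simp [S5]⟩,
      by simp [Subtype.ext_iff]⟩⟩
  exact hconn.preconnected.not_isIsolated _ Hgraph_isIsolated_true_true_true
end
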